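/- arXiv:quant-ph/0505084 — 5 statements merged into one kernel-verified Lean document; each statement's English description precedes it below -/
import Mathlib

section
/- Let d = 2, let (a_1,…,a_k) be a perfect measurement on the complex 2×2 matrices, let θ₀ be a density matrix, and let P be a probability measure on Ω = {1,…,k}^ℕ satisfying the cylinder condition for θ₀. Then either (i) for P-almost every ω, for every m ∈ ℕ, lim_{n→∞} tr(Θ_n(ω)^m) = 1; or (ii) every a_i is proportional to a unitary, i.e. for each i there exist λ_i ≥ 0 and a unitary 2×2 matrix u_i with a_i = √λ_i · u_i. -/
open Matrix MeasureTheory Filter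
open scoped ComplexOrder

/-- For a finite word `w = (i₁,…,iₙ)` (as a list `[i₁,…,iₙ]`), the matrix
`A_w := a_{iₙ} ⋯ a_{i₁}`. -/
noncomputable def wordMatrix {I : Type*} {d : ℕ} (a : I → Matrix (Fin d) (Fin d) ℂ)
    (w : List I) : Matrix (Fin d) (Fin d) ℂ :=
  (w.reverse.map a).prod

/-- The quantum trajectory `Θ_n(ω) = A_w θ₀ A_w* / tr(A_w θ₀ A_w*)` with
`w = (ω₁,…,ω_n)`, set to the fixed density matrix `σ` when the trace vanishes. -/
noncomputable def traj {d k : ℕ} (a : Fin k → Matrix (Fin d) (Fin d) ℂ)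
    (θ₀ σ : Matrix (Fin d) (Fin d) ℂ) (n : ℕ) (ω : ℕ → Fin k) :
    Matrix (Fin d) (Fin d) ℂ :=
  let A := wordMatrix a (List.ofFn fun j : Fin n => ω (j : ℕ))
  if (A * θ₀ * Aᴴ).trace ≠ 0 then ((A * θ₀ * Aᴴ).trace)⁻¹ • (A * θ₀ * Aᴴ) else σ

/-- `P` satisfies the cylinder condition for `θ₀`. -/
def CylinderCondition {d k : ℕ} (a : Fin k → Matrix (Fin d) (Fin d) ℂ)
    (θ₀ : Matrix (Fin d) (Fin d) ℂ) (P : Measure (ℕ → Fin k)) : Prop :=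
  ∀ (n : ℕ) (w : Fin n → Fin k),
    P {ω | ∀ j : Fin n, ω (j : ℕ) = w j} =
      ENNReal.ofReal
        ((wordMatrix a (List.ofFn w) * θ₀ * (wordMatrix a (List.ofFn w))ᴴ).trace.re)

namespace Purify

variable {n : Type*} [Fintype n] [DecidableEq n]

lemma psd_trace_repr {M : Matrix n n ℂ} (hM : M.PosSemidef) :
    ∃ t : ℝ, 0 ≤ t ∧ M.trace = (t : ℂ) ∧ (t = 0 → M = 0) := by
  obtain ⟨B, rfl⟩ : ∃ B : Matrix n n ℂ, M = Bᴴ * B := (by open scoped MatrixOrder in exact CStarAlgebra.nonneg_iff_eq_star_mul_self.mp hM.nonneg)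
  refine ⟨∑ i, ∑ j, Complex.normSq (B j i),
    Finset.sum_nonneg fun i _ => Finset.sum_nonneg fun j _ => Complex.normSq_nonneg _, ?_, ?_⟩
  · have : (Bᴴ * B).trace = ∑ i, ∑ j, ((Complex.normSq (B j i) : ℝ) : ℂ) := by
      simp [Matrix.trace, Matrix.diag, Matrix.mul_apply, Matrix.conjTranspose_apply,
        Complex.normSq_eq_conj_mul_self]
    rw [this]
    push_cast
    ring
  · intro ht
    have hB : B = 0 := by
      ext p q
      by_contra hpq
      have h1 : 0 < ∑ i, ∑ j, Complex.normSq (B j i) := by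
        refine Finset.sum_pos' (fun i _ => Finset.sum_nonneg fun j _ => Complex.normSq_nonneg _)
          ⟨q, Finset.mem_univ q, Finset.sum_pos'
            (fun j _ => Complex.normSq_nonneg _)
            ⟨p, Finset.mem_univ p, Complex.normSq_pos.mpr hpq⟩⟩
      rw [ht] at h1; exact lt_irrefl 0 h1
    simp [hB]

lemma psd_det_repr {M : Matrix n n ℂ} (hM : M.PosSemidef) :
    ∃ r : ℝ, 0 ≤ r ∧ M.det = (r : ℂ) := by
  obtain ⟨B, rfl⟩ : ∃ B : Matrix n n ℂ, M = Bᴴ * B := (by open scoped MatrixOrder in exact CStarAlgebra.nonneg_iff_eq_star_mul_self.mp hM.nonneg)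
  refine ⟨Complex.normSq B.det, Complex.normSq_nonneg _, ?_⟩
  rw [Matrix.det_mul, Matrix.det_conjTranspose, Complex.normSq_eq_conj_mul_self]
  rfl

lemma psd_smul_real {M : Matrix n n ℂ} (hM : M.PosSemidef) {r : ℝ} (hr : 0 ≤ r) :
    ((r : ℂ) • M).PosSemidef := by
  refine Matrix.PosSemidef.of_dotProduct_mulVec_nonneg ?_ ?_
  · show ((r:ℂ) • M)ᴴ = (r:ℂ) • M
    rw [Matrix.conjTranspose_smul, hM.1.eq]
    congr 1
    simp [Complex.star_def, Complex.conj_ofReal]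
  · intro x
    have h2 := hM.dotProduct_mulVec_nonneg x
    have : star x ⬝ᵥ ((r:ℂ) • M) *ᵥ x = (r:ℂ) * (star x ⬝ᵥ M *ᵥ x) := by
      rw [Matrix.smul_mulVec, dotProduct_smul, smul_eq_mul]
    rw [this]
    exact mul_nonneg (by exact_mod_cast Complex.zero_le_real.mpr hr) h2

lemma sq_eq_of_trace_one (ρ : Matrix (Fin 2) (Fin 2) ℂ) (h : ρ.trace = 1) :
    ρ ^ 2 = ρ - ρ.det • 1 := by
  have h' : ρ 0 0 + ρ 1 1 = 1 := by simpa [Matrix.trace_fin_two] using h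
  ext i j
  rw [pow_two]
  fin_cases i <;> fin_cases j <;>
    simp [Matrix.mul_apply, Matrix.det_fin_two, Fin.sum_univ_two, Matrix.sub_apply,
      Matrix.smul_apply, Matrix.one_apply, smul_eq_mul]
  · linear_combination (ρ 0 0) * h'
  · linear_combination (ρ 0 1) * h'
  · linear_combination (ρ 1 0) * h'
  · linear_combination (ρ 1 1) * h'

lemma trace_pow_bound {ρ : Matrix (Fin 2) (Fin 2) ℂ} (hρ : ρ.PosSemidef) (hτ : ρ.trace = 1)
    (m : ℕ) (hm : 1 ≤ m) : ‖(ρ ^ m).trace - 1‖ ≤ 2 * m * ρ.det.re := by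
  obtain ⟨dd, hd0, hdet⟩ := psd_det_repr hρ
  have hre : ρ.det.re = dd := by rw [hdet]; simp
  have hpow : ∀ p : ℕ, ∃ t : ℝ, 0 ≤ t ∧ (ρ ^ p).trace = (t : ℂ) := fun p => by
    obtain ⟨t, h0, h1, _⟩ := psd_trace_repr (hρ.pow p); exact ⟨t, h0, h1⟩
  choose t ht0 htr using hpow
  have h0 : t 0 = 2 := by
    have h := htr 0
    rw [pow_zero, Matrix.trace_one] at h
    have h2 : ((2:ℝ) : ℂ) = ((t 0 : ℝ) : ℂ) := by rw [← h]; norm_num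
    exact_mod_cast h2.symm
  have h1 : t 1 = 1 := by
    have := htr 1
    rw [pow_one, hτ] at this
    exact_mod_cast this.symm
  have hrec : ∀ p, t (p + 2) = t (p + 1) - dd * t p := by
    intro p
    have e : ρ ^ (p + 2) = ρ ^ (p + 1) - ρ.det • ρ ^ p := by
      rw [pow_add ρ p 2, sq_eq_of_trace_one ρ hτ, mul_sub, Matrix.mul_smul, mul_one, ← pow_succ]
    have e2 := congrArg Matrix.trace e
    rw [Matrix.trace_sub, Matrix.trace_smul, htr, htr, htr, hdet, smul_eq_mul] at e2
    exact_mod_cast e2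
  have hub : ∀ p, t p ≤ 2 ∧ t (p + 1) ≤ 2 := by
    intro p
    induction p with
    | zero => exact ⟨by rw [h0], by rw [h1]; norm_num⟩
    | succ q ih =>
      refine ⟨ih.2, ?_⟩
      rw [hrec]
      nlinarith [ht0 q, ih.1, ih.2]
  have herr : ∀ p : ℕ, |1 - t (p + 1)| ≤ 2 * dd * p := by
    intro p
    induction p with
    | zero => simp [h1]
    | succ q ih =>
      rw [hrec]
      have h3 : |1 - (t (q + 1) - dd * t q)| ≤ |1 - t (q + 1)| + dd * t q := by
        have := abs_add_le (1 - t (q + 1)) (dd * t q)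
        have h4 : |dd * t q| = dd * t q := abs_of_nonneg (mul_nonneg hd0 (ht0 q))
        calc |1 - (t (q + 1) - dd * t q)| = |(1 - t (q + 1)) + dd * t q| := by ring_nf
          _ ≤ |1 - t (q + 1)| + |dd * t q| := abs_add_le _ _
          _ = |1 - t (q + 1)| + dd * t q := by rw [h4]
      have h5 : dd * t q ≤ 2 * dd := by nlinarith [(hub q).1, ht0 q]
      push_cast
      calc |1 - (t (q + 1) - dd * t q)| ≤ |1 - t (q + 1)| + dd * t q := h3
        _ ≤ 2 * dd * q + 2 * dd := by push_cast at ih ⊢; linarith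
        _ = 2 * dd * (q + 1) := by ring
  obtain ⟨q, rfl⟩ : ∃ q, m = q + 1 := ⟨m - 1, (Nat.succ_pred_eq_of_pos hm).symm⟩
  have heq : (ρ ^ (q + 1)).trace - 1 = ((t (q + 1) - 1 : ℝ) : ℂ) := by
    rw [htr]; push_cast; ring
  rw [heq, Complex.norm_real, Real.norm_eq_abs, hre, abs_sub_comm]
  calc |1 - t (q + 1)| ≤ 2 * dd * q := herr q
    _ ≤ 2 * (q + 1) * dd := by nlinarith [hd0]
    _ = 2 * ((q : ℕ) + 1 : ℕ) * dd := by push_cast; ring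


lemma amgm (A : Matrix (Fin 2) (Fin 2) ℂ) :
    ‖A.det‖ ≤ ((Aᴴ * A).trace).re / 2 ∧
      ((∀ μ : ℂ, Aᴴ * A ≠ μ • 1) → ‖A.det‖ < ((Aᴴ * A).trace).re / 2) := by
  set b := Aᴴ * A with hb
  have hpsd : b.PosSemidef := Matrix.posSemidef_conjTranspose_mul_self A
  have hxx : b 0 0 = ((∑ j, Complex.normSq (A j 0) : ℝ) : ℂ) := by
    rw [hb]
    simp [Matrix.mul_apply, Matrix.conjTranspose_apply, Complex.normSq_eq_conj_mul_self]
  have hyy : b 1 1 = ((∑ j, Complex.normSq (A j 1) : ℝ) : ℂ) := by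
    rw [hb]
    simp [Matrix.mul_apply, Matrix.conjTranspose_apply, Complex.normSq_eq_conj_mul_self]
  set x : ℝ := ∑ j, Complex.normSq (A j 0) with hxdef
  set y : ℝ := ∑ j, Complex.normSq (A j 1) with hydef
  have hx0 : 0 ≤ x := Finset.sum_nonneg fun j _ => Complex.normSq_nonneg _
  have hy0 : 0 ≤ y := Finset.sum_nonneg fun j _ => Complex.normSq_nonneg _
  set z : ℂ := b 0 1 with hzdef
  have hz : b 1 0 = (starRingEnd ℂ) z := by
    have h1 := hpsd.1.apply 0 1
    have h2 : b 1 0 = star (b 0 1) := by rw [← h1, star_star]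
    simpa [Complex.star_def] using h2
  have htr : (b.trace).re = x + y := by
    rw [Matrix.trace_fin_two, hxx, hyy]
    simp
  have hdetb : b.det = ((x * y - Complex.normSq z : ℝ) : ℂ) := by
    rw [Matrix.det_fin_two, hxx, hyy, hz]
    push_cast
    rw [Complex.normSq_eq_conj_mul_self]
    ring
  have hnsq : Complex.normSq A.det = x * y - Complex.normSq z := by
    have h1 : b.det = ((Complex.normSq A.det : ℝ) : ℂ) := by
      rw [hb, Matrix.det_mul, Matrix.det_conjTranspose, Complex.normSq_eq_conj_mul_self]
      rfl
    have := h1.symm.trans hdetb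
    exact_mod_cast this
  have habs : ‖A.det‖ = Real.sqrt (x * y - Complex.normSq z) := by
    rw [Complex.norm_def, hnsq]
  have hsub0 : 0 ≤ x * y - Complex.normSq z := hnsq ▸ Complex.normSq_nonneg _
  constructor
  · rw [habs, htr]
    have key : x * y - Complex.normSq z ≤ ((x + y) / 2) ^ 2 := by
      nlinarith [Complex.normSq_nonneg z, sq_nonneg (x - y)]
    calc Real.sqrt (x * y - Complex.normSq z) ≤ Real.sqrt (((x + y) / 2) ^ 2) :=
          Real.sqrt_le_sqrt key
      _ = (x + y) / 2 := Real.sqrt_sq (by positivity)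
  · intro hns
    have hkey : z ≠ 0 ∨ x ≠ y := by
      by_contra hcon
      push_neg at hcon
      obtain ⟨hz0, hxy⟩ := hcon
      apply hns ((x : ℂ))
      ext i j
      fin_cases i <;> fin_cases j <;>
        simp [hxx, hyy, ← hzdef, hz, hz0, ← hxy, Matrix.one_apply, Matrix.smul_apply]
    have key : x * y - Complex.normSq z < ((x + y) / 2) ^ 2 := by
      rcases hkey with h | h
      · nlinarith [Complex.normSq_pos.mpr h, sq_nonneg (x - y)]
      · have h2 : x - y ≠ 0 := sub_ne_zero.mpr h
        have : 0 < (x - y) ^ 2 := by positivity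
        nlinarith [Complex.normSq_nonneg z]
    rw [habs, htr]
    calc Real.sqrt (x * y - Complex.normSq z) < Real.sqrt (((x + y) / 2) ^ 2) :=
          Real.sqrt_lt_sqrt hsub0 key
      _ = (x + y) / 2 := Real.sqrt_sq (by positivity)


noncomputable def trajW {d k : ℕ} (a : Fin k → Matrix (Fin d) (Fin d) ℂ)
    (θ₀ σ : Matrix (Fin d) (Fin d) ℂ) {n : ℕ} (w : Fin n → Fin k) :
    Matrix (Fin d) (Fin d) ℂ :=
  let A := wordMatrix a (List.ofFn w)
  if (A * θ₀ * Aᴴ).trace ≠ 0 then ((A * θ₀ * Aᴴ).trace)⁻¹ • (A * θ₀ * Aᴴ) else σ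

lemma traj_eq_trajW {d k : ℕ} (a : Fin k → Matrix (Fin d) (Fin d) ℂ)
    (θ₀ σ : Matrix (Fin d) (Fin d) ℂ) (n : ℕ) (ω : ℕ → Fin k) :
    traj a θ₀ σ n ω = trajW a θ₀ σ (fun j : Fin n => ω (j : ℕ)) := rfl

lemma abs_det_word {k : ℕ} (a : Fin k → Matrix (Fin 2) (Fin 2) ℂ) {n : ℕ}
    (w : Fin n → Fin k) :
    ‖(wordMatrix a (List.ofFn w)).det‖ = ∏ j, ‖(a (w j)).det‖ := by
  unfold wordMatrix
  have h1 : ((List.ofFn w).reverse.map a).prod.det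
      = (((List.ofFn w).reverse.map a).map Matrix.det).prod := by
    simpa [Matrix.coe_detMonoidHom] using
      map_list_prod (Matrix.detMonoidHom) ((List.ofFn w).reverse.map a)
  rw [h1, List.norm_prod, List.map_map, List.map_map,
    List.map_reverse, List.prod_reverse, List.map_ofFn, List.prod_ofFn]
  rfl

lemma sum_prod_pow {k n : ℕ} (g : Fin k → ℝ) :
    ∑ w : Fin n → Fin k, ∏ j, g (w j) = (∑ i, g i) ^ n := by
  classical
  have h := Finset.prod_univ_sum (fun _ : Fin n => (Finset.univ : Finset (Fin k)))
    (fun _ i => g i)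
  rw [Fintype.piFinset_univ] at h
  rw [← h, Finset.prod_const, Finset.card_univ, Fintype.card_fin]

lemma word_term {k : ℕ} (a : Fin k → Matrix (Fin 2) (Fin 2) ℂ)
    {θ₀ : Matrix (Fin 2) (Fin 2) ℂ} (σ : Matrix (Fin 2) (Fin 2) ℂ) (hθ : θ₀.PosSemidef)
    {n : ℕ} (w : Fin n → Fin k) :
    ENNReal.ofReal (Real.sqrt ((trajW a θ₀ σ w).det.re)) *
      ENNReal.ofReal ((wordMatrix a (List.ofFn w) * θ₀ * (wordMatrix a (List.ofFn w))ᴴ).trace.re)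
      = ENNReal.ofReal (‖(wordMatrix a (List.ofFn w)).det‖ * Real.sqrt (θ₀.det.re)) := by
  set A := wordMatrix a (List.ofFn w) with hA
  set M := A * θ₀ * Aᴴ with hM
  have hMpsd : M.PosSemidef := hθ.mul_mul_conjTranspose_same A
  obtain ⟨dθ, hdθ0, hdθ⟩ := psd_det_repr hθ
  have hdθre : θ₀.det.re = dθ := by rw [hdθ]; simp
  have hMdet : M.det = ((Complex.normSq A.det * dθ : ℝ) : ℂ) := by
    rw [hM, Matrix.det_mul, Matrix.det_mul, Matrix.det_conjTranspose, hdθ]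
    have hst : (star (A.det) : ℂ) = (starRingEnd ℂ) A.det := rfl
    rw [hst]
    push_cast
    linear_combination (dθ : ℂ) * Complex.mul_conj A.det
  obtain ⟨τ, hτ0, hτeq, hτz⟩ := psd_trace_repr hMpsd
  have hτre : M.trace.re = τ := by rw [hτeq]; simp
  by_cases h : M.trace = 0
  · have hτzero : τ = 0 := by
      have := hτeq.symm.trans h
      exact_mod_cast this
    have hM0 : M = 0 := hτz hτzero
    have hdet0 : Complex.normSq A.det * dθ = 0 := by
      have : M.det = 0 := by rw [hM0]; simp
      rw [hMdet] at this
      exact_mod_cast this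
    have hzero : ‖A.det‖ * Real.sqrt dθ = 0 := by
      have hsq : (‖A.det‖ * Real.sqrt dθ) ^ 2 = 0 := by
        rw [mul_pow, Complex.sq_norm, Real.sq_sqrt hdθ0, hdet0]
      exact (pow_eq_zero_iff (by norm_num : (2:ℕ) ≠ 0)).mp hsq
    rw [hτre, hτzero, hdθre, hzero]
    simp
  · have hτpos : 0 < τ := lt_of_le_of_ne hτ0 (by
      intro hc
      exact h (by rw [hτeq, ← hc]; simp))
    have hiftrue : trajW a θ₀ σ w = (M.trace)⁻¹ • M := by
      rw [trajW]
      simp only [← hA, ← hM]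
      rw [if_pos h]
    have hdet : (trajW a θ₀ σ w).det = ((τ⁻¹ ^ 2 * (Complex.normSq A.det * dθ) : ℝ) : ℂ) := by
      rw [hiftrue, Matrix.det_smul, hMdet, hτeq, Fintype.card_fin]
      push_cast
      ring
    have hre : (trajW a θ₀ σ w).det.re = τ⁻¹ ^ 2 * (Complex.normSq A.det * dθ) := by
      rw [hdet, Complex.ofReal_re]
    have hsqrt : Real.sqrt (τ⁻¹ ^ 2 * (Complex.normSq A.det * dθ))
        = τ⁻¹ * (‖A.det‖ * Real.sqrt dθ) := by
      rw [Real.sqrt_mul (sq_nonneg _), Real.sqrt_sq (by positivity),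
        Real.sqrt_mul (Complex.normSq_nonneg _), ← Complex.norm_def]
    rw [hre, hsqrt, hτre, hdθre, ← ENNReal.ofReal_mul (by positivity)]
    congr 1
    rw [mul_comm, ← mul_assoc, mul_inv_cancel₀ hτpos.ne', one_mul]

lemma lintegral_V {k : ℕ} (a : Fin k → Matrix (Fin 2) (Fin 2) ℂ)
    {θ₀ : Matrix (Fin 2) (Fin 2) ℂ} (σ : Matrix (Fin 2) (Fin 2) ℂ) (hθ : θ₀.PosSemidef)
    (P : Measure (ℕ → Fin k)) (hP : CylinderCondition a θ₀ P) (n : ℕ) :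
    ∫⁻ ω, ENNReal.ofReal (Real.sqrt ((traj a θ₀ σ n ω).det.re)) ∂P
      = ENNReal.ofReal ((∑ i, ‖(a i).det‖) ^ n * Real.sqrt (θ₀.det.re)) := by
  classical
  have hres : Measurable (fun ω : ℕ → Fin k => fun j : Fin n => ω (j : ℕ)) :=
    measurable_pi_lambda _ fun j => measurable_pi_apply _
  have hg : Measurable (fun w : Fin n → Fin k =>
      ENNReal.ofReal (Real.sqrt ((trajW a θ₀ σ w).det.re))) := measurable_of_countable _
  have step1 : ∫⁻ ω, ENNReal.ofReal (Real.sqrt ((traj a θ₀ σ n ω).det.re)) ∂P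
      = ∫⁻ w, ENNReal.ofReal (Real.sqrt ((trajW a θ₀ σ w).det.re))
          ∂(P.map (fun ω : ℕ → Fin k => fun j : Fin n => ω (j : ℕ))) := by
    rw [lintegral_map hg hres]
    rfl
  rw [step1, lintegral_fintype]
  have step2 : ∀ w : Fin n → Fin k,
      (P.map (fun ω : ℕ → Fin k => fun j : Fin n => ω (j : ℕ))) {w}
        = ENNReal.ofReal
          ((wordMatrix a (List.ofFn w) * θ₀ * (wordMatrix a (List.ofFn w))ᴴ).trace.re) := by
    intro w
    rw [Measure.map_apply hres (measurableSet_singleton w)]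
    have hpre : (fun ω : ℕ → Fin k => fun j : Fin n => ω (j : ℕ)) ⁻¹' {w}
        = {ω : ℕ → Fin k | ∀ j : Fin n, ω (j : ℕ) = w j} := by
      ext ω
      simp [Set.mem_preimage, Set.mem_singleton_iff, funext_iff]
    rw [hpre]
    exact hP n w
  have step3 : ∀ w : Fin n → Fin k,
      ENNReal.ofReal (Real.sqrt ((trajW a θ₀ σ w).det.re)) *
        (P.map (fun ω : ℕ → Fin k => fun j : Fin n => ω (j : ℕ))) {w}
      = ENNReal.ofReal
          ((∏ j, ‖(a (w j)).det‖) * Real.sqrt (θ₀.det.re)) := by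
    intro w
    rw [step2 w, word_term a σ hθ w, abs_det_word a w]
  rw [Finset.sum_congr rfl fun w _ => step3 w,
    ← ENNReal.ofReal_sum_of_nonneg (fun w _ => by positivity), ← Finset.sum_mul,
    sum_prod_pow (fun i => ‖(a i).det‖)]

end Purify

/-- In dimension 2 the quantum trajectory of a repeated perfect measurement either
purifies with probability 1, or all the `a_i` are proportional to unitaries. -/
theorem purification_dim_two {k : ℕ}
    (a : Fin k → Matrix (Fin 2) (Fin 2) ℂ)
    (ha : ∑ i, (a i)ᴴ * a i = 1)
    (θ₀ : Matrix (Fin 2) (Fin 2) ℂ)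
    (hθ₀ : θ₀.PosSemidef ∧ θ₀.trace = 1)
    (σ : Matrix (Fin 2) (Fin 2) ℂ)
    (hσ : σ.PosSemidef ∧ σ.trace = 1)
    (P : Measure (ℕ → Fin k)) [IsProbabilityMeasure P]
    (hP : CylinderCondition a θ₀ P) :
    (∀ᵐ ω ∂P, ∀ m : ℕ, 1 ≤ m →
        Tendsto (fun n : ℕ => ((traj a θ₀ σ n ω) ^ m).trace) atTop (nhds 1)) ∨
    (∀ i : Fin k, ∃ l : ℝ, 0 ≤ l ∧ ∃ u : Matrix (Fin 2) (Fin 2) ℂ,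
        u ∈ Matrix.unitaryGroup (Fin 2) ℂ ∧ a i = (Real.sqrt l : ℂ) • u) := by
  classical
  by_cases hsc : ∀ i, ∃ μ : ℂ, (a i)ᴴ * a i = μ • (1 : Matrix (Fin 2) (Fin 2) ℂ)
  · right
    intro i
    obtain ⟨μ, hμ⟩ := hsc i
    have hpsd : ((a i)ᴴ * (a i)).PosSemidef := Matrix.posSemidef_conjTranspose_mul_self (a i)
    obtain ⟨t, ht0, hteq, htz⟩ := Purify.psd_trace_repr hpsd
    have htrace : ((a i)ᴴ * a i).trace = μ * 2 := by
      rw [hμ, Matrix.trace_smul, Matrix.trace_one, smul_eq_mul]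
      norm_num
    have hμval : μ = ((t / 2 : ℝ) : ℂ) := by
      have h2 : (t : ℂ) = μ * 2 := hteq.symm.trans htrace
      push_cast
      linear_combination -h2 / 2
    refine ⟨t / 2, by positivity, ?_⟩
    by_cases ht : t = 0
    · have h0 : (a i)ᴴ * a i = 0 := htz ht
      have ha0 : a i = 0 := Matrix.conjTranspose_mul_self_eq_zero.mp h0
      exact ⟨1, one_mem _, by simp [ha0, ht]⟩
    · have htpos : 0 < t / 2 := by
        have : 0 < t := lt_of_le_of_ne ht0 (Ne.symm ht)
        linarith
      set s : ℝ := Real.sqrt (t / 2) with hs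
      have hspos : 0 < s := Real.sqrt_pos.mpr htpos
      have hssq : s * s = t / 2 := Real.mul_self_sqrt (le_of_lt htpos)
      refine ⟨((s : ℂ))⁻¹ • a i, ?_, ?_⟩
      · rw [Matrix.mem_unitaryGroup_iff']
        have hstar : star (((s : ℂ))⁻¹ • a i) = ((s : ℂ))⁻¹ • (a i)ᴴ := by
          rw [star_smul]
          congr 1
          rw [star_inv₀, Complex.star_def, Complex.conj_ofReal]
        rw [hstar, Matrix.smul_mul, Matrix.mul_smul, smul_smul, hμ, smul_smul, hμval]
        have : ((s:ℂ))⁻¹ * ((s:ℂ))⁻¹ * ((t/2 : ℝ) : ℂ) = 1 := by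
          rw [← hssq]
          push_cast
          field_simp
        rw [this, one_smul]
      · rw [smul_smul]
        have : ((s:ℂ)) * ((s:ℂ))⁻¹ = 1 := mul_inv_cancel₀ (by exact_mod_cast hspos.ne')
        rw [this, one_smul]
  · left
    push_neg at hsc
    obtain ⟨i₀, hi₀⟩ := hsc
    set c : ℝ := ∑ i, ‖(a i).det‖ with hc
    have htr2 : ∑ i, ((a i)ᴴ * a i).trace.re = 2 := by
      have h1 := congrArg Matrix.trace ha
      rw [Matrix.trace_sum, Matrix.trace_one] at h1
      have h2 := congrArg Complex.re h1
      rw [Complex.re_sum] at h2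
      simpa using h2
    have hclt : c < 1 := by
      have hstrict : ‖(a i₀).det‖ < ((a i₀)ᴴ * a i₀).trace.re / 2 :=
        (Purify.amgm (a i₀)).2 (hi₀)
      calc c < ∑ i, ((a i)ᴴ * a i).trace.re / 2 :=
            Finset.sum_lt_sum (fun i _ => (Purify.amgm (a i)).1)
              ⟨i₀, Finset.mem_univ _, hstrict⟩
        _ = (∑ i, ((a i)ᴴ * a i).trace.re) / 2 := by rw [Finset.sum_div]
        _ = 1 := by rw [htr2]; norm_num
    have hc0 : 0 ≤ c := Finset.sum_nonneg fun i _ => norm_nonneg _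
    set V : ℕ → (ℕ → Fin k) → ENNReal :=
      fun n ω => ENNReal.ofReal (Real.sqrt ((traj a θ₀ σ n ω).det.re)) with hV
    have hVmeas : ∀ n, Measurable (V n) := by
      intro n
      have hres : Measurable (fun ω : ℕ → Fin k => fun j : Fin n => ω (j : ℕ)) :=
        measurable_pi_lambda _ fun j => measurable_pi_apply _
      have hg : Measurable (fun w : Fin n → Fin k =>
          ENNReal.ofReal (Real.sqrt ((Purify.trajW a θ₀ σ w).det.re))) := measurable_of_countable _
      exact hg.comp hres
    have hlint : ∀ n, ∫⁻ ω, V n ω ∂P = ENNReal.ofReal (c ^ n * Real.sqrt (θ₀.det.re)) :=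
      fun n => Purify.lintegral_V a σ hθ₀.1 P hP n
    have htsum : ∫⁻ ω, (∑' n, V n ω) ∂P ≠ ⊤ := by
      rw [lintegral_tsum fun n => (hVmeas n).aemeasurable]
      have heach : ∀ n : ℕ, ∫⁻ ω, V n ω ∂P
          = ENNReal.ofReal c ^ n * ENNReal.ofReal (Real.sqrt (θ₀.det.re)) := by
        intro n
        rw [hlint n, ENNReal.ofReal_mul (by positivity), ENNReal.ofReal_pow hc0]
      rw [tsum_congr heach, ENNReal.tsum_mul_right, ENNReal.tsum_geometric]
      refine ENNReal.mul_ne_top (ENNReal.inv_ne_top.mpr ?_) ENNReal.ofReal_ne_top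
      rw [Ne, tsub_eq_zero_iff_le]
      exact not_le.mpr (ENNReal.ofReal_lt_one.mpr hclt)
    have h2 : ∀ᵐ ω ∂P,
        Tendsto (fun n => Real.sqrt ((traj a θ₀ σ n ω).det.re)) atTop (nhds 0) := by
      filter_upwards [ae_lt_top (Measurable.ennreal_tsum hVmeas) htsum] with ω hω
      have hsummable := ENNReal.summable_toReal hω.ne
      have heq : (fun n => (V n ω).toReal)
          = fun n => Real.sqrt ((traj a θ₀ σ n ω).det.re) := by
        funext n
        exact ENNReal.toReal_ofReal (Real.sqrt_nonneg _)
      rw [heq] at hsummable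
      exact hsummable.tendsto_atTop_zero
    have h1 : ∀ᵐ ω ∂P, ∀ n : ℕ,
        (wordMatrix a (List.ofFn fun j : Fin n => ω (j : ℕ)) * θ₀ *
          (wordMatrix a (List.ofFn fun j : Fin n => ω (j : ℕ)))ᴴ).trace ≠ 0 := by
      rw [ae_all_iff]
      intro n
      rw [ae_iff]
      set S : Set (ℕ → Fin k) := ⋃ w : Fin n → Fin k,
        ⋃ (_ : (wordMatrix a (List.ofFn w) * θ₀ * (wordMatrix a (List.ofFn w))ᴴ).trace = 0),
          {ω : ℕ → Fin k | ∀ j : Fin n, ω (j : ℕ) = w j} with hS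
      have hsub : {ω : ℕ → Fin k | ¬ (wordMatrix a (List.ofFn fun j : Fin n => ω (j : ℕ)) * θ₀ *
          (wordMatrix a (List.ofFn fun j : Fin n => ω (j : ℕ)))ᴴ).trace ≠ 0} ⊆ S := by
        intro ω hω
        simp only [Set.mem_setOf_eq, not_not] at hω
        exact Set.mem_iUnion.mpr ⟨fun j => ω (j : ℕ), Set.mem_iUnion.mpr ⟨hω, fun j => rfl⟩⟩
      have hnull : P S = 0 := by
        refine measure_iUnion_null fun w => ?_
        by_cases hw : (wordMatrix a (List.ofFn w) * θ₀ * (wordMatrix a (List.ofFn w))ᴴ).trace = 0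
        · simp only [hw, Set.iUnion_true]
          rw [hP n w, hw]
          simp
        · simp [hw]
      exact measure_mono_null hsub hnull
    filter_upwards [h1, h2] with ω hne htend
    intro m hm
    have htraj : ∀ n : ℕ, (traj a θ₀ σ n ω).PosSemidef ∧ (traj a θ₀ σ n ω).trace = 1 := by
      intro n
      set A := wordMatrix a (List.ofFn fun j : Fin n => ω (j : ℕ)) with hA
      have hMpsd : (A * θ₀ * Aᴴ).PosSemidef := hθ₀.1.mul_mul_conjTranspose_same A
      obtain ⟨τ, hτ0, hτeq, _⟩ := Purify.psd_trace_repr hMpsd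
      have hne' := hne n
      rw [← hA] at hne'
      have hifeq : traj a θ₀ σ n ω = ((A * θ₀ * Aᴴ).trace)⁻¹ • (A * θ₀ * Aᴴ) := by
        rw [traj]
        simp only [← hA]
        rw [if_pos hne']
      constructor
      · rw [hifeq, hτeq]
        have hcast : ((τ : ℂ))⁻¹ = ((τ⁻¹ : ℝ) : ℂ) := by push_cast; ring
        rw [hcast]
        exact Purify.psd_smul_real hMpsd (by positivity)
      · rw [hifeq, Matrix.trace_smul, smul_eq_mul, inv_mul_cancel₀ hne']
    have hdet0 : ∀ n, 0 ≤ (traj a θ₀ σ n ω).det.re := by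
      intro n
      obtain ⟨r, hr0, hreq⟩ := Purify.psd_det_repr (htraj n).1
      rw [hreq, Complex.ofReal_re]
      exact hr0
    have htendδ : Tendsto (fun n => (traj a θ₀ σ n ω).det.re) atTop (nhds 0) := by
      have hmul : Tendsto (fun n => Real.sqrt ((traj a θ₀ σ n ω).det.re) *
          Real.sqrt ((traj a θ₀ σ n ω).det.re)) atTop (nhds 0) := by
        simpa using htend.mul htend
      exact Tendsto.congr (fun n => Real.mul_self_sqrt (hdet0 n)) hmul
    have hbound : ∀ n, ‖((traj a θ₀ σ n ω) ^ m).trace - 1‖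
        ≤ 2 * m * (traj a θ₀ σ n ω).det.re := by
      intro n
      exact Purify.trace_pow_bound (htraj n).1 (htraj n).2 m hm
    have hnorm : Tendsto (fun n => ‖((traj a θ₀ σ n ω) ^ m).trace - 1‖) atTop (nhds 0) := by
      have hb : Tendsto (fun n => 2 * (m : ℝ) * (traj a θ₀ σ n ω).det.re) atTop (nhds 0) := by
        simpa using htendδ.const_mul (2 * (m : ℝ))
      exact squeeze_zero (fun n => norm_nonneg _) hbound hb
    exact tendsto_iff_norm_sub_tendsto_zero.mpr hnorm
end

section
/- Let a_1,…,a_k be complex d×d matrices with Σ_{i=1}^k a_i* a_i = 1. Suppose there exists a density matrix ρ such that for each i = 1,…,k there exist λ_i ≥ 0 and a unitary d×d matrix u_i with a_i ρ a_i* = λ_i · u_i ρ u_i*. Let p denote the support projection of ρ, i.e. the orthogonal projection onto the range of ρ. Then for all i = 1,…,k, p a_i* a_i p = λ_i p. -/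
open Matrix
open scoped ComplexOrder


lemma trace_ctm_formula {d : ℕ} (A : Matrix (Fin d) (Fin d) ℂ) :
    (Aᴴ * A).trace = ((∑ i, ∑ j, Complex.normSq (A j i) : ℝ) : ℂ) := by
  simp [Matrix.trace, Matrix.mul_apply, Matrix.conjTranspose_apply, Matrix.diag,
    Complex.normSq_eq_conj_mul_self]

lemma trace_ctm_nonneg {d : ℕ} (A : Matrix (Fin d) (Fin d) ℂ) :
    0 ≤ (Aᴴ * A).trace := by
  rw [trace_ctm_formula]
  have : (0:ℝ) ≤ ∑ i, ∑ j, Complex.normSq (A j i) :=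
    Finset.sum_nonneg fun i _ => Finset.sum_nonneg fun j _ => Complex.normSq_nonneg _
  exact_mod_cast this

lemma eq_zero_of_trace_ctm {d : ℕ} (A : Matrix (Fin d) (Fin d) ℂ)
    (h : (Aᴴ * A).trace = 0) : A = 0 := by
  rw [trace_ctm_formula] at h
  have h0 : (∑ i, ∑ j, Complex.normSq (A j i) : ℝ) = 0 := by exact_mod_cast h
  have h1 := (Finset.sum_eq_zero_iff_of_nonneg (fun i _ => Finset.sum_nonneg fun j _ => Complex.normSq_nonneg _)).mp h0
  ext j i
  have h2 := (Finset.sum_eq_zero_iff_of_nonneg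
    (fun j _ => Complex.normSq_nonneg _)).mp (h1 i (Finset.mem_univ i)) j (Finset.mem_univ j)
  simpa using Complex.normSq_eq_zero.mp h2

lemma nonneg_of_real_mul_nonneg (r : ℝ) (hr : 0 < r) (x : ℂ) (h : 0 ≤ (r:ℂ) * x) : 0 ≤ x := by
  have h1 : (0:ℂ) ≤ ((r⁻¹ : ℝ) : ℂ) := by exact_mod_cast (inv_pos.mpr hr).le
  have := mul_nonneg h1 h
  rwa [← mul_assoc, ← Complex.ofReal_mul, inv_mul_cancel₀ hr.ne', Complex.ofReal_one,
    one_mul] at this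


theorem factor_aux {d : ℕ} (p r : Matrix (Fin d) (Fin d) ℂ)
    (h : LinearMap.range (Matrix.toLin' p) ≤ LinearMap.range (Matrix.toLin' r)) :
    ∃ H : Matrix (Fin d) (Fin d) ℂ, p = r * H := by
  set f := Matrix.toLin' p with hf
  set g := Matrix.toLin' r with hg
  obtain ⟨s, hs⟩ := g.rangeRestrict.exists_rightInverse_of_surjective
    (LinearMap.range_rangeRestrict g)
  set h' : (Fin d → ℂ) →ₗ[ℂ] (Fin d → ℂ) :=
    s ∘ₗ (f.codRestrict (LinearMap.range g) (fun x => h (LinearMap.mem_range_self f x)))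
    with hh'
  have key : f = g ∘ₗ h' := by
    apply LinearMap.ext
    intro x
    have h1 : ∀ y : LinearMap.range g, g (s y) = y := fun y => by
      simpa using congrArg Subtype.val (LinearMap.congr_fun hs y)
    simp only [LinearMap.comp_apply, hh']
    rw [h1]
    rfl
  refine ⟨LinearMap.toMatrix' h', ?_⟩
  have : Matrix.toLin' p = Matrix.toLin' (r * LinearMap.toMatrix' h') := by
    rw [Matrix.toLin'_mul, Matrix.toLin'_toMatrix', ← hf, ← hg, key]
  exact Matrix.toLin'.injective this

theorem key_aux {d k : ℕ} (T : Fin k → Matrix (Fin d) (Fin d) ℂ)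
    (ρ : Matrix (Fin d) (Fin d) ℂ) (l : Fin k → ℝ) (hl : ∀ i, 0 ≤ l i)
    (hsum : ∑ i, T i = ρ)
    (hherm : ∀ i, (T i)ᴴ = T i)
    (hρh : ρᴴ = ρ)
    (htr : ∀ i, (T i).trace = (l i : ℂ))
    (htrρ : ρ.trace = 1)
    (hsq : ∀ i, (T i * T i).trace = (l i : ℂ) * (l i : ℂ) * (ρ * ρ).trace)
    (hpos : ∀ i j, 0 ≤ (T i * T j).trace) :
    ∀ i, T i = (l i : ℂ) • ρ := by
  have hz : ∀ i, l i = 0 → T i = 0 := by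
    intro i hi
    apply eq_zero_of_trace_ctm
    rw [hherm i, hsq i, hi]
    simp
  have hcs : ∀ i j, (T i * T j).trace ≤ (l i : ℂ) * (l j : ℂ) * (ρ * ρ).trace := by
    intro i j
    rcases eq_or_lt_of_le (hl i) with h0 | hi
    · rw [hz i h0.symm, Matrix.zero_mul, Matrix.trace_zero, ← h0]
      simp
    rcases eq_or_lt_of_le (hl j) with h0 | hj
    · rw [hz j h0.symm, Matrix.mul_zero, Matrix.trace_zero, ← h0]
      simp
    set Y := (l j : ℂ) • T i - (l i : ℂ) • T j with hY
    have hYh : Yᴴ = Y := by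
      simp [hY, Matrix.conjTranspose_smul, hherm, Complex.star_def, Complex.conj_ofReal]
    have h1 : 0 ≤ (Yᴴ * Y).trace := trace_ctm_nonneg Y
    have h2 : (Yᴴ * Y).trace =
        ((2 * l i * l j : ℝ) : ℂ) * ((l i:ℂ) * (l j:ℂ) * (ρ*ρ).trace - (T i * T j).trace) := by
      rw [hYh, hY]
      have hcomm : (T j * T i).trace = (T i * T j).trace := Matrix.trace_mul_comm _ _
      simp only [Matrix.sub_mul, Matrix.mul_sub, smul_mul_assoc, mul_smul_comm,
        Matrix.trace_sub, Matrix.trace_smul, smul_eq_mul, smul_smul]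
      rw [hsq i, hsq j, hcomm]
      push_cast
      ring
    rw [h2] at h1
    have h3 := nonneg_of_real_mul_nonneg (2 * l i * l j) (by positivity) _ h1
    exact sub_nonneg.mp h3
  have hsuml : ∑ i, ((l i : ℂ)) = 1 := by
    calc ∑ i, ((l i : ℂ)) = ∑ i, (T i).trace := by
          exact Finset.sum_congr rfl fun i _ => (htr i).symm
      _ = (∑ i, T i).trace := (Matrix.trace_sum _ _).symm
      _ = 1 := by rw [hsum, htrρ]
  have hdbl : ∑ i, ∑ j, (T i * T j).trace = (ρ * ρ).trace := by
    rw [← hsum, Finset.sum_mul_sum, Matrix.trace_sum]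
    exact Finset.sum_congr rfl fun i _ => (Matrix.trace_sum _ _).symm
  have hkey : ∀ i j, (T i * T j).trace = (l i:ℂ) * (l j:ℂ) * (ρ*ρ).trace := by
    have hsum0 : ∑ i, ∑ j, ((l i:ℂ) * (l j:ℂ) * (ρ*ρ).trace - (T i * T j).trace) = 0 := by
      simp only [Finset.sum_sub_distrib]
      rw [hdbl]
      have : ∑ i, ∑ j, (l i:ℂ) * (l j:ℂ) * (ρ*ρ).trace
          = (∑ i, (l i:ℂ)) * (∑ j, (l j:ℂ)) * (ρ*ρ).trace := by
        rw [Finset.sum_mul_sum, Finset.sum_mul]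
        exact Finset.sum_congr rfl fun i _ => (Finset.sum_mul _ _ _).symm
      rw [this, hsuml]
      ring
    intro i j
    have houter := (Finset.sum_eq_zero_iff_of_nonneg (fun i _ =>
      Finset.sum_nonneg fun j _ => sub_nonneg.mpr (hcs i j))).mp hsum0 i (Finset.mem_univ i)
    have hinner := (Finset.sum_eq_zero_iff_of_nonneg (fun j _ =>
      sub_nonneg.mpr (hcs i j))).mp houter j (Finset.mem_univ j)
    exact (sub_eq_zero.mp hinner).symm
  intro i
  have htρ : (T i * ρ).trace = (l i:ℂ) * (ρ*ρ).trace := by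
    have h4 : T i * ρ = ∑ j, T i * T j := by rw [← hsum, Finset.mul_sum]
    rw [h4, Matrix.trace_sum]
    calc ∑ j, (T i * T j).trace = ∑ j, (l i:ℂ) * (ρ*ρ).trace * (l j:ℂ) := by
          refine Finset.sum_congr rfl fun j _ => ?_
          rw [hkey i j]; ring
      _ = (l i:ℂ) * (ρ*ρ).trace * ∑ j, (l j:ℂ) := by rw [Finset.mul_sum]
      _ = (l i:ℂ) * (ρ*ρ).trace := by rw [hsuml, mul_one]
  have hρT : (ρ * T i).trace = (l i:ℂ) * (ρ*ρ).trace := by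
    rw [Matrix.trace_mul_comm]; exact htρ
  have hD : ((T i - (l i:ℂ) • ρ)ᴴ * (T i - (l i:ℂ) • ρ)).trace = 0 := by
    have hdh : (T i - (l i:ℂ) • ρ)ᴴ = T i - (l i:ℂ) • ρ := by
      simp [Matrix.conjTranspose_smul, hherm, hρh, Complex.star_def, Complex.conj_ofReal]
    rw [hdh]
    simp only [Matrix.sub_mul, Matrix.mul_sub, smul_mul_assoc, mul_smul_comm,
      Matrix.trace_sub, Matrix.trace_smul, smul_eq_mul, smul_smul]
    rw [hsq i, htρ, hρT]
    ring
  have h5 := eq_zero_of_trace_ctm _ hD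
  exact sub_eq_zero.mp h5

/-- If `Σ aᵢ* aᵢ = 1` and a density matrix `ρ` satisfies `aᵢ ρ aᵢ* = λᵢ · uᵢ ρ uᵢ*`
with `λᵢ ≥ 0` and `uᵢ` unitary, then on the support projection `p` of `ρ` one has
`p aᵢ* aᵢ p = λᵢ p`. -/
theorem dark_support_projection {d k : ℕ}
    (a : Fin k → Matrix (Fin d) (Fin d) ℂ)
    (ha : ∑ i, (a i)ᴴ * a i = 1)
    (ρ : Matrix (Fin d) (Fin d) ℂ)
    (hρ : ρ.PosSemidef ∧ ρ.trace = 1)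
    (l : Fin k → ℝ) (hl : ∀ i, 0 ≤ l i)
    (u : Fin k → Matrix (Fin d) (Fin d) ℂ)
    (hu : ∀ i, u i ∈ Matrix.unitaryGroup (Fin d) ℂ)
    (heq : ∀ i, a i * ρ * (a i)ᴴ = (l i : ℂ) • (u i * ρ * (u i)ᴴ))
    (p : Matrix (Fin d) (Fin d) ℂ)
    (hp : p.IsHermitian ∧ p * p = p ∧
      LinearMap.range (Matrix.toLin' p) = LinearMap.range (Matrix.toLin' ρ)) :
    ∀ i : Fin k, p * (a i)ᴴ * a i * p = (l i : ℂ) • p := by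
  obtain ⟨hpsd, htrρ⟩ := hρ
  obtain ⟨hpH, hpp, hprange⟩ := hp
  obtain ⟨r, hr, hrH⟩ : ∃ r : Matrix (Fin d) (Fin d) ℂ, r * r = ρ ∧ rᴴ = r := by
    open scoped MatrixOrder in
    exact ⟨CFC.sqrt ρ, CFC.sqrt_mul_sqrt_self ρ hpsd.nonneg,
      (CFC.sqrt_nonneg ρ).posSemidef.isHermitian⟩
  have huu : ∀ i, (u i)ᴴ * u i = 1 := by
    intro i
    have := (Matrix.mem_unitaryGroup_iff'.mp (hu i))
    rwa [Matrix.star_eq_conjTranspose] at this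
  have htru : ∀ i, (u i * ρ * (u i)ᴴ).trace = 1 := by
    intro i
    rw [Matrix.trace_mul_cycle, huu i, one_mul, htrρ]
  -- cancellation helper
  have hucancel : ∀ i (X : Matrix (Fin d) (Fin d) ℂ), (u i)ᴴ * (u i * X) = X := by
    intro i X
    rw [← mul_assoc, huu i, one_mul]
  -- the T family
  set T : Fin k → Matrix (Fin d) (Fin d) ℂ := fun i => r * ((a i)ᴴ * a i) * r with hT
  have hsum : ∑ i, T i = ρ := by
    rw [hT]
    simp only [← Finset.sum_mul, ← Finset.mul_sum]
    rw [ha, mul_one, hr]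
  have hherm : ∀ i, (T i)ᴴ = T i := by
    intro i
    simp [hT, Matrix.conjTranspose_mul, hrH, mul_assoc]
  have htr : ∀ i, (T i).trace = (l i : ℂ) := by
    intro i
    rw [hT]
    calc (r * ((a i)ᴴ * a i) * r).trace = (r * r * ((a i)ᴴ * a i)).trace := by
          rw [Matrix.trace_mul_cycle]
      _ = ((a i)ᴴ * (a i * ρ)).trace := by rw [hr, Matrix.trace_mul_comm, mul_assoc]
      _ = (a i * ρ * (a i)ᴴ).trace := by
          rw [Matrix.trace_mul_comm, mul_assoc]
      _ = (l i : ℂ) := by rw [heq i, Matrix.trace_smul, htru i, smul_eq_mul, mul_one]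
  have hTT : ∀ i j, T i * T j = (a i * r)ᴴ * ((a i * r) * ((a j * r)ᴴ * (a j * r))) := by
    intro i j
    rw [hT]
    simp [Matrix.conjTranspose_mul, hrH, mul_assoc]
  have hcc : ∀ i, (a i * r) * (a i * r)ᴴ = a i * ρ * (a i)ᴴ := by
    intro i
    simp [Matrix.conjTranspose_mul, hrH, ← hr, mul_assoc]
  have hsq : ∀ i, (T i * T i).trace = (l i : ℂ) * (l i : ℂ) * (ρ * ρ).trace := by
    intro i
    rw [hTT i i, Matrix.trace_mul_comm]
    have e1 : (a i * r) * ((a i * r)ᴴ * (a i * r)) * (a i * r)ᴴ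
        = (a i * ρ * (a i)ᴴ) * (a i * ρ * (a i)ᴴ) := by
      rw [← hcc i]
      simp only [mul_assoc]
    rw [e1, heq i]
    rw [Matrix.smul_mul, Matrix.mul_smul, smul_smul, Matrix.trace_smul, smul_eq_mul]
    have e2 : u i * ρ * (u i)ᴴ * (u i * ρ * (u i)ᴴ) = u i * (ρ * ρ) * (u i)ᴴ := by
      simp only [mul_assoc]
      rw [hucancel]
    rw [e2]
    have e3 : (u i * (ρ * ρ) * (u i)ᴴ).trace = (ρ * ρ).trace := by
      rw [Matrix.trace_mul_cycle, ← mul_assoc, huu i, one_mul]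
    rw [e3]
  have hpos : ∀ i j, 0 ≤ (T i * T j).trace := by
    intro i j
    have e1 : (T i * T j).trace
        = ((((a i * r) * (a j * r)ᴴ))ᴴ * ((a i * r) * (a j * r)ᴴ)).trace := by
      rw [hTT i j, Matrix.trace_mul_comm,
        Matrix.trace_mul_comm ((a i * r) * (a j * r)ᴴ)ᴴ ((a i * r) * (a j * r)ᴴ)]
      simp only [Matrix.conjTranspose_mul, Matrix.conjTranspose_conjTranspose, hrH, mul_assoc]
    rw [e1]
    exact trace_ctm_nonneg _
  have hfin := key_aux T ρ l hl hsum hherm hpsd.isHermitian htr htrρ hsq hpos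
  -- factorization
  have hrange : LinearMap.range (Matrix.toLin' p) ≤ LinearMap.range (Matrix.toLin' r) := by
    rw [hprange, ← hr, Matrix.toLin'_mul]
    exact LinearMap.range_comp_le_range _ _
  obtain ⟨H, hpr⟩ := factor_aux p r hrange
  have hpl : p = Hᴴ * r := by
    conv_lhs => rw [← hpH, hpr]
    rw [Matrix.conjTranspose_mul, hrH]
  intro i
  have hTi : r * ((a i)ᴴ * a i) * r = (l i : ℂ) • ρ := hfin i
  have e2 : (Hᴴ * r) * ((a i)ᴴ * a i) * (r * H) = (l i:ℂ) • ((Hᴴ * r) * (r * H)) := by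
    calc (Hᴴ * r) * ((a i)ᴴ * a i) * (r * H)
        = Hᴴ * (r * ((a i)ᴴ * a i) * r) * H := by simp only [mul_assoc]
      _ = Hᴴ * ((l i : ℂ) • ρ) * H := by rw [hTi]
      _ = (l i:ℂ) • (Hᴴ * ρ * H) := by rw [Matrix.mul_smul, Matrix.smul_mul]
      _ = (l i:ℂ) • ((Hᴴ * r) * (r * H)) := by rw [← hr]; simp only [mul_assoc]
  rw [← hpl, ← hpr] at e2
  have e3 : p * ((a i)ᴴ * a i) * p = (l i : ℂ) • p := by rw [e2, hpp]
  calc p * (a i)ᴴ * a i * p = p * ((a i)ᴴ * a i) * p := by simp only [mul_assoc]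
    _ = (l i : ℂ) • p := e3
end

section
/- Let (Ω, F, P) be a probability space with a filtration (F_n)_{n∈ℕ}, and let (M_n)_{n∈ℕ} be a submartingale with respect to (F_n) such that 0 ≤ M_n ≤ 1 almost surely for every n. Then the increments of M are square-summable in expectation: Σ_{n=0}^∞ E[(M_{n+1} − M_n)²] ≤ 1. -/
open MeasureTheory

/-- The increments of a `[0,1]`-valued submartingale are square-summable in
expectation: `Σₙ E[(M_{n+1} − M_n)²] ≤ 1`. -/
theorem submartingale_increments_square_summable
    {Ω : Type*} {m0 : MeasurableSpace Ω} {P : Measure Ω} [IsProbabilityMeasure P]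
    (ℱ : Filtration ℕ m0) (M : ℕ → Ω → ℝ)
    (hM : Submartingale M ℱ P)
    (hbdd : ∀ n, ∀ᵐ ω ∂P, 0 ≤ M n ω ∧ M n ω ≤ 1) :
    ∑' n : ℕ, ENNReal.ofReal (∫ ω, (M (n + 1) ω - M n ω) ^ 2 ∂P) ≤ 1 := by
  -- basic facts
  have hmeas : ∀ n, AEStronglyMeasurable (M n) P := fun n =>
    ((hM.stronglyAdapted n).mono (ℱ.le n)).aestronglyMeasurable
  have hbd : ∀ n, ∀ᵐ ω ∂P, ‖M n ω‖ ≤ 1 := by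
    intro n
    filter_upwards [hbdd n] with ω ⟨h0, h1⟩
    rw [Real.norm_eq_abs, abs_le]; constructor <;> linarith
  have hmul : ∀ n k, Integrable (M n * M k) P := fun n k =>
    Integrable.bdd_mul (hM.integrable k) (hmeas n) (hbd n)
  -- key step: cross term is nonnegative
  have hcross : ∀ n, 0 ≤ ∫ ω, M n ω * (M (n + 1) ω - M n ω) ∂P := by
    intro n
    have hint : Integrable (fun ω => M n ω * (M (n + 1) ω - M n ω)) P := by
      have : (fun ω => M n ω * (M (n + 1) ω - M n ω)) =
          (M n * M (n + 1)) - (M n * M n) := by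
        funext ω; simp [mul_sub]
      rw [this]; exact (hmul n (n + 1)).sub (hmul n n)
    have hintsub : Integrable (M (n + 1) - M n) P :=
      (hM.integrable (n + 1)).sub (hM.integrable n)
    have hpull : P[(M n) * (M (n + 1) - M n)|ℱ n] =ᵐ[P]
        M n * P[M (n + 1) - M n|ℱ n] :=
      condExp_mul_of_stronglyMeasurable_left (hM.stronglyAdapted n)
        hint hintsub
    have hce : (0 : Ω → ℝ) ≤ᵐ[P] M n * P[M (n + 1) - M n|ℱ n] := by
      have hsub : P[M (n + 1) - M n|ℱ n] =ᵐ[P]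
          P[M (n + 1)|ℱ n] - M n := by
        refine (condExp_sub (hM.integrable (n + 1)) (hM.integrable n) _).trans ?_
        rw [condExp_of_stronglyMeasurable (ℱ.le n) (hM.stronglyAdapted n) (hM.integrable n)]
      filter_upwards [hsub, hM.ae_le_condExp (Nat.le_succ n), hbdd n] with ω h1 h2 h3
      have : 0 ≤ (P[M (n + 1) - M n|ℱ n]) ω := by
        rw [h1]; simp only [Pi.sub_apply]; linarith
      exact mul_nonneg h3.1 this
    calc (0 : ℝ) ≤ ∫ ω, (M n * P[M (n + 1) - M n|ℱ n]) ω ∂P := by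
          refine integral_nonneg_of_ae ?_
          filter_upwards [hce] with ω h using h
      _ = ∫ ω, (P[(M n) * (M (n + 1) - M n)|ℱ n]) ω ∂P :=
          integral_congr_ae hpull.symm
      _ = ∫ ω, M n ω * (M (n + 1) ω - M n ω) ∂P := by
          rw [integral_condExp (ℱ.le n)]; rfl
  -- increment bound: E[(M_{n+1}-M_n)^2] ≤ E[M_{n+1}^2] - E[M_n^2]
  have hsq : ∀ n, Integrable (fun ω => M n ω ^ 2) P := by
    intro n; simp only [sq]; exact hmul n n
  have hstep : ∀ n, ∫ ω, (M (n + 1) ω - M n ω) ^ 2 ∂P ≤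
      (∫ ω, M (n + 1) ω ^ 2 ∂P) - ∫ ω, M n ω ^ 2 ∂P := by
    intro n
    have hid : ∀ ω, (M (n + 1) ω - M n ω) ^ 2 =
        M (n + 1) ω ^ 2 - M n ω ^ 2 - 2 * (M n ω * (M (n + 1) ω - M n ω)) := by
      intro ω; ring
    have hintc : Integrable (fun ω => M n ω * (M (n + 1) ω - M n ω)) P := by
      have : (fun ω => M n ω * (M (n + 1) ω - M n ω)) =
          (M n * M (n + 1)) - (M n * M n) := by
        funext ω; simp [mul_sub]
      rw [this]; exact (hmul n (n + 1)).sub (hmul n n)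
    calc ∫ ω, (M (n + 1) ω - M n ω) ^ 2 ∂P
        = ∫ ω, (M (n + 1) ω ^ 2 - M n ω ^ 2
            - 2 * (M n ω * (M (n + 1) ω - M n ω))) ∂P := by
          exact integral_congr_ae (Filter.Eventually.of_forall fun ω => hid ω)
      _ = (∫ ω, M (n + 1) ω ^ 2 ∂P) - (∫ ω, M n ω ^ 2 ∂P)
            - 2 * ∫ ω, M n ω * (M (n + 1) ω - M n ω) ∂P := by
          have h1 : Integrable (fun ω => M (n + 1) ω ^ 2 - M n ω ^ 2) P :=
            (hsq (n + 1)).sub (hsq n)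
          have h2 : Integrable (fun ω => 2 * (M n ω * (M (n + 1) ω - M n ω))) P :=
            hintc.const_mul 2
          rw [integral_sub h1 h2, integral_sub (hsq (n + 1)) (hsq n),
            integral_const_mul]
      _ ≤ (∫ ω, M (n + 1) ω ^ 2 ∂P) - ∫ ω, M n ω ^ 2 ∂P := by
          have := hcross n; linarith
  -- partial sums telescope
  have hub : ∀ n, ∫ ω, M n ω ^ 2 ∂P ≤ 1 := by
    intro n
    calc ∫ ω, M n ω ^ 2 ∂P ≤ ∫ _ω, (1 : ℝ) ∂P := by
          refine integral_mono_ae (hsq n) (integrable_const 1) ?_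
          filter_upwards [hbdd n] with ω ⟨h0, h1⟩
          nlinarith
      _ = 1 := by simp
  have hpartial : ∀ N : ℕ, ∑ n ∈ Finset.range N, ∫ ω, (M (n + 1) ω - M n ω) ^ 2 ∂P ≤ 1 := by
    intro N
    have : ∑ n ∈ Finset.range N, ∫ ω, (M (n + 1) ω - M n ω) ^ 2 ∂P ≤
        ∑ n ∈ Finset.range N, ((∫ ω, M (n + 1) ω ^ 2 ∂P) - ∫ ω, M n ω ^ 2 ∂P) :=
      Finset.sum_le_sum fun n _ => hstep n
    rw [Finset.sum_range_sub (fun n => ∫ ω, M n ω ^ 2 ∂P)] at this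
    have h0 : 0 ≤ ∫ ω, M 0 ω ^ 2 ∂P := integral_nonneg fun ω => sq_nonneg _
    have := hub N
    linarith
  -- conclude for the tsum
  rw [ENNReal.tsum_eq_iSup_sum]
  refine iSup_le fun s => ?_
  obtain ⟨N, hN⟩ := s.exists_nat_subset_range
  calc ∑ n ∈ s, ENNReal.ofReal (∫ ω, (M (n + 1) ω - M n ω) ^ 2 ∂P)
      ≤ ∑ n ∈ Finset.range N, ENNReal.ofReal (∫ ω, (M (n + 1) ω - M n ω) ^ 2 ∂P) :=
        Finset.sum_le_sum_of_subset hN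
    _ = ENNReal.ofReal (∑ n ∈ Finset.range N, ∫ ω, (M (n + 1) ω - M n ω) ^ 2 ∂P) :=
        (ENNReal.ofReal_sum_of_nonneg fun n _ =>
          integral_nonneg fun ω => sq_nonneg _).symm
    _ ≤ ENNReal.ofReal 1 := ENNReal.ofReal_le_ofReal (hpartial N)
    _ = 1 := ENNReal.ofReal_one
end

section
/- Let p_1,…,p_l be mutually orthogonal projections among the complex d×d matrices with Σ_{i=1}^l p_i = 1, let (π_{ij}) be an l×l row-stochastic matrix (π_{ij} ≥ 0 and Σ_{j=1}^l π_{ij} = 1 for each i), and for each pair (i,j) let v_{ij} be a complex d×d matrix with v_{ij}* v_{ij} = p_i and v_{ij} v_{ij}* v_{ij} = v_{ij} with range of v_{ij} contained in the range of p_j (i.e. p_j v_{ij} = v_{ij}). Set a_{ij} := √π_{ij} · v_{ij}. Then Σ_{i,j} a_{ij}* a_{ij} = 1, so the family (a_{ij}) indexed by {1,…,l}² is a perfect measurement, and each p_i is a dark projection: for every finite word w with letters in {1,…,l}² there exists λ_w ≥ 0 with p_i A_w* A_w p_i = λ_w p_i. -/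
open Matrix

theorem wordMatrix_nil {I : Type*} {d : ℕ} (a : I → Matrix (Fin d) (Fin d) ℂ) :
    wordMatrix a [] = 1 := rfl

theorem wordMatrix_cons {I : Type*} {d : ℕ} (a : I → Matrix (Fin d) (Fin d) ℂ)
    (α : I) (w : List I) :
    wordMatrix a (α :: w) = wordMatrix a w * a α := by
  simp [wordMatrix, List.reverse_cons]

/-- Example 1 of dark subspaces: mutually orthogonal projections `p₁,…,p_l` summing
to `1`, a row-stochastic matrix `(π_{ij})` and partial isometries `v_{ij}` from the
range of `p_i` into the range of `p_j` give a perfect measurement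
`a_{ij} = √π_{ij} v_{ij}` for which each `p_i` is a dark projection. -/
theorem orthogonal_dark_subspaces_example {d l : ℕ}
    (p : Fin l → Matrix (Fin d) (Fin d) ℂ)
    (hherm : ∀ i, (p i).IsHermitian)
    (hidem : ∀ i, p i * p i = p i)
    (horth : ∀ i j, i ≠ j → p i * p j = 0)
    (hsum : ∑ i, p i = 1)
    (π : Fin l → Fin l → ℝ)
    (hπ : ∀ i j, 0 ≤ π i j) (hrow : ∀ i, ∑ j, π i j = 1)
    (v : Fin l → Fin l → Matrix (Fin d) (Fin d) ℂ)
    (hviso : ∀ i j, (v i j)ᴴ * v i j = p i)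
    (hvpart : ∀ i j, v i j * (v i j)ᴴ * v i j = v i j)
    (hvrange : ∀ i j, p j * v i j = v i j) :
    (∑ α : Fin l × Fin l,
        ((Real.sqrt (π α.1 α.2) : ℂ) • v α.1 α.2)ᴴ *
          ((Real.sqrt (π α.1 α.2) : ℂ) • v α.1 α.2) = 1) ∧
    ∀ i : Fin l, ∀ w : List (Fin l × Fin l), ∃ lw : ℝ, 0 ≤ lw ∧
      p i * (wordMatrix (fun α : Fin l × Fin l =>
            (Real.sqrt (π α.1 α.2) : ℂ) • v α.1 α.2) w)ᴴ *
          wordMatrix (fun α : Fin l × Fin l =>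
            (Real.sqrt (π α.1 α.2) : ℂ) • v α.1 α.2) w * p i =
        (lw : ℂ) • p i := by
  set a : Fin l × Fin l → Matrix (Fin d) (Fin d) ℂ :=
    fun α => (Real.sqrt (π α.1 α.2) : ℂ) • v α.1 α.2 with ha
  -- v i j * p i = v i j
  have hvp : ∀ i j, v i j * p i = v i j := by
    intro i j
    conv_lhs => rw [← hviso i j, ← mul_assoc, hvpart i j]
  constructor
  · -- perfect measurement
    have key1 : ∀ x y : Fin l, ((Real.sqrt (π x y) : ℂ) • v x y)ᴴ *
        ((Real.sqrt (π x y) : ℂ) • v x y) = ((π x y : ℂ)) • p x := by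
      intro x y
      simp only [conjTranspose_smul, smul_mul_assoc, mul_smul_comm, smul_smul,
        hviso x y]
      congr 1
      rw [Complex.star_def, Complex.conj_ofReal, ← Complex.ofReal_mul,
        Real.mul_self_sqrt (hπ x y)]
    rw [Fintype.sum_prod_type]
    simp only [key1]
    have : ∀ i : Fin l, ∑ j, ((π i j : ℂ)) • p i = p i := by
      intro i
      rw [← Finset.sum_smul]
      have : ∑ j, (π i j : ℂ) = 1 := by
        rw [← Complex.ofReal_sum, hrow i, Complex.ofReal_one]
      rw [this, one_smul]
    simp only [this, hsum]
  · -- dark projection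
    intro i w
    -- key lemma by induction
    have key : ∀ (w : List (Fin l × Fin l)) (i : Fin l),
        ∃ (c : ℝ) (V : Matrix (Fin d) (Fin d) ℂ), 0 ≤ c ∧
          wordMatrix a w * p i = (c : ℂ) • V ∧ Vᴴ * V = p i := by
      intro w
      induction w with
      | nil =>
        intro i
        exact ⟨1, p i, zero_le_one, by simp [wordMatrix_nil, (hherm i).eq, hidem i],
          by rw [(hherm i).eq, hidem i]⟩
      | cons α w ih =>
        intro i
        rw [wordMatrix_cons]
        by_cases hα : α.1 = i
        · obtain ⟨c, V, hc, hV, hVV⟩ := ih α.2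
          refine ⟨Real.sqrt (π α.1 α.2) * c, V * v α.1 α.2,
            mul_nonneg (Real.sqrt_nonneg _) hc, ?_, ?_⟩
          · have h1 : a α * p i = (Real.sqrt (π α.1 α.2) : ℂ) • v α.1 α.2 := by
              rw [ha]
              simp only [smul_mul_assoc]
              rw [← hα, hvp]
            calc wordMatrix a w * a α * p i
                = wordMatrix a w * (a α * p i) := by rw [mul_assoc]
              _ = (Real.sqrt (π α.1 α.2) : ℂ) • (wordMatrix a w * v α.1 α.2) := by
                  rw [h1, mul_smul_comm]
              _ = (Real.sqrt (π α.1 α.2) : ℂ) • (wordMatrix a w * (p α.2 * v α.1 α.2)) := by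
                  rw [hvrange]
              _ = (Real.sqrt (π α.1 α.2) : ℂ) • ((wordMatrix a w * p α.2) * v α.1 α.2) := by
                  rw [mul_assoc]
              _ = ((Real.sqrt (π α.1 α.2) * c : ℝ) : ℂ) • (V * v α.1 α.2) := by
                  rw [hV, smul_mul_assoc, smul_smul, Complex.ofReal_mul]
          · calc (V * v α.1 α.2)ᴴ * (V * v α.1 α.2)
                = (v α.1 α.2)ᴴ * (Vᴴ * V) * v α.1 α.2 := by
                  rw [conjTranspose_mul]; simp only [mul_assoc]
              _ = (v α.1 α.2)ᴴ * (p α.2 * v α.1 α.2) := by rw [hVV, mul_assoc]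
              _ = (v α.1 α.2)ᴴ * v α.1 α.2 := by rw [hvrange]
              _ = p i := by rw [hviso, hα]
        · refine ⟨0, p i, le_refl 0, ?_, by rw [(hherm i).eq, hidem i]⟩
          have h1 : a α * p i = 0 := by
            rw [ha]
            simp only [smul_mul_assoc]
            rw [← hvp α.1 α.2, mul_assoc, horth α.1 i hα, mul_zero, smul_zero]
          rw [mul_assoc, h1, mul_zero, Complex.ofReal_zero, zero_smul]
    obtain ⟨c, V, hc, hV, hVV⟩ := key w i
    refine ⟨c * c, mul_nonneg hc hc, ?_⟩
    have hAp : (wordMatrix a w * p i)ᴴ = p i * (wordMatrix a w)ᴴ := by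
      rw [conjTranspose_mul, (hherm i).eq]
    calc p i * (wordMatrix a w)ᴴ * wordMatrix a w * p i
        = (wordMatrix a w * p i)ᴴ * (wordMatrix a w * p i) := by
          rw [hAp, mul_assoc]
      _ = ((c : ℂ) • V)ᴴ * ((c : ℂ) • V) := by rw [hV]
      _ = ((c * c : ℝ) : ℂ) • p i := by
          rw [conjTranspose_smul, smul_mul_assoc, mul_smul_comm, smul_smul, hVV]
          congr 1
          rw [Complex.star_def, Complex.conj_ofReal, ← Complex.ofReal_mul]
end

section
/- Let (a_1,…,a_k) be a perfect measurement on the complex d×d matrices, let θ₀ be a density matrix, and let P be a probability measure on Ω = {1,…,k}^ℕ satisfying the cylinder condition for θ₀. Let (F_n)_{n∈ℕ} be the filtration on Ω in which F_n is generated by the first n coordinate maps. Then for every m ∈ ℕ, the process M_n^{(m)} := tr(Θ_n^m), which takes values in [0,1], is a submartingale with respect to (F_n) and P: E[M_{n+1}^{(m)} | F_n] ≥ M_n^{(m)} P-almost surely for every n. -/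
open Matrix MeasureTheory Filter
open scoped ComplexOrder

/-- The filtration on `Ω = {1,…,k}^ℕ` in which `F_n` is generated by the first `n`
coordinate maps. -/
def coordFiltration (k : ℕ) :
    Filtration ℕ (inferInstance : MeasurableSpace (ℕ → Fin k)) where
  seq n := MeasurableSpace.comap (fun (ω : ℕ → Fin k) (j : Fin n) => ω (j : ℕ))
    inferInstance
  mono' := by
    intro m n hmn
    have h : (fun (ω : ℕ → Fin k) (j : Fin m) => ω (j : ℕ)) =
        (fun (v : Fin n → Fin k) (j : Fin m) => v (Fin.castLE hmn j)) ∘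
          (fun (ω : ℕ → Fin k) (j : Fin n) => ω (j : ℕ)) := rfl
    show MeasurableSpace.comap (fun (ω : ℕ → Fin k) (j : Fin m) => ω (j : ℕ))
        inferInstance ≤
      MeasurableSpace.comap (fun (ω : ℕ → Fin k) (j : Fin n) => ω (j : ℕ))
        inferInstance
    rw [h, ← MeasurableSpace.comap_comp]
    exact MeasurableSpace.comap_mono
      ((measurable_pi_lambda _ (fun j => measurable_pi_apply _)).comap_le)
  le' := by
    intro n
    exact (measurable_pi_lambda _ (fun j => measurable_pi_apply _)).comap_le


open Complex

namespace QT
variable {d : ℕ} {ρ τ : Matrix (Fin d) (Fin d) ℂ}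

lemma rearr (n : ℕ) {x y : ℝ} (hx : 0 ≤ x) (hy : 0 ≤ y) :
    x * y ^ (n+1) + x ^ (n+1) * y ≤ x ^ (n+2) + y ^ (n+2) := by
  have key : ∀ u v : ℝ, 0 ≤ u → u ≤ v →
      u * v ^ (n+1) + u ^ (n+1) * v ≤ u ^ (n+2) + v ^ (n+2) := by
    intro u v hu huv
    have h1 : u ^ (n+1) ≤ v ^ (n+1) := pow_le_pow_left₀ hu huv (n+1)
    have h2 : 0 ≤ (v - u) * (v ^ (n+1) - u ^ (n+1)) :=
      mul_nonneg (sub_nonneg.2 huv) (sub_nonneg.2 h1)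
    calc u * v ^ (n+1) + u ^ (n+1) * v
        ≤ u * v ^ (n+1) + u ^ (n+1) * v + (v - u) * (v ^ (n+1) - u ^ (n+1)) := by linarith
      _ = u ^ (n+2) + v ^ (n+2) := by ring
  rcases le_total x y with h | h
  · exact key x y hx h
  · have := key y x hy h; linarith

lemma scalar_young (m : ℕ) {x y : ℝ} (hx : 0 ≤ x) (hy : 0 ≤ y) :
    ((m:ℝ)+1) * (x ^ m * y) ≤ (m:ℝ) * x ^ (m+1) + y ^ (m+1) := by
  induction m with
  | zero => simp
  | succ m ih =>
    have h1 : x * (((m:ℝ)+1) * (x ^ m * y)) ≤ x * ((m:ℝ) * x ^ (m+1) + y ^ (m+1)) :=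
      mul_le_mul_of_nonneg_left ih hx
    have h1' : ((m:ℝ)+1) * (x ^ (m+1) * y) ≤ (m:ℝ) * x ^ (m+2) + x * y ^ (m+1) := by
      calc ((m:ℝ)+1) * (x ^ (m+1) * y) = x * (((m:ℝ)+1) * (x ^ m * y)) := by ring
        _ ≤ x * ((m:ℝ) * x ^ (m+1) + y ^ (m+1)) := h1
        _ = (m:ℝ) * x ^ (m+2) + x * y ^ (m+1) := by ring
    have h2 := rearr m hx hy
    push_cast
    linarith

lemma conj_pow {U D : Matrix (Fin d) (Fin d) ℂ} (hU1 : U * star U = 1)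
    (hU2 : star U * U = 1) (r : ℕ) : (U * D * star U) ^ r = U * D ^ r * star U := by
  induction r with
  | zero => simpa using hU1.symm
  | succ r ih =>
    rw [pow_succ, ih]
    have : U * D ^ r * star U * (U * D * star U) = U * D ^ r * (star U * U) * (D * star U) := by
      simp only [Matrix.mul_assoc]
    rw [this, hU2, Matrix.mul_one, pow_succ, Matrix.mul_assoc, Matrix.mul_assoc, Matrix.mul_assoc]

lemma trace_pow_eq (h : ρ.IsHermitian) (r : ℕ) :
    (ρ ^ r).trace = ((∑ j, h.eigenvalues j ^ r : ℝ) : ℂ) := by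
  have hU1 : (h.eigenvectorUnitary : Matrix (Fin d) (Fin d) ℂ) *
      star (h.eigenvectorUnitary : Matrix (Fin d) (Fin d) ℂ) = 1 :=
    mem_unitaryGroup_iff.mp h.eigenvectorUnitary.2
  have hU2 : star (h.eigenvectorUnitary : Matrix (Fin d) (Fin d) ℂ) *
      (h.eigenvectorUnitary : Matrix (Fin d) (Fin d) ℂ) = 1 :=
    mem_unitaryGroup_iff'.mp h.eigenvectorUnitary.2
  conv_lhs => rw [h.spectral_theorem, Unitary.conjStarAlgAut_apply, conj_pow hU1 hU2]
  rw [Matrix.trace_mul_cycle, hU2, Matrix.one_mul, diagonal_pow, trace_diagonal]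
  push_cast
  rfl

lemma trace_diag_mul (f : Fin d → ℂ) (M : Matrix (Fin d) (Fin d) ℂ) :
    (Matrix.diagonal f * M).trace = ∑ j, f j * M j j := by
  simp [Matrix.trace, Matrix.diag, Matrix.diagonal_mul]

lemma sandwich_entry (W : Matrix (Fin d) (Fin d) ℂ) (e : Fin d → ℂ) (j : Fin d) :
    (W * Matrix.diagonal e * star W) j j = ∑ l, (W j l * e l) * (starRingEnd ℂ) (W j l) := by
  rw [Matrix.star_eq_conjTranspose, Matrix.mul_apply]
  refine Finset.sum_congr rfl fun l _ => ?_
  rw [Matrix.mul_diagonal, Matrix.conjTranspose_apply]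
  rfl

lemma trace_young (hρ : ρ.PosSemidef) (hτ : τ.PosSemidef) (m : ℕ) :
    ((m:ℝ)+1) * (ρ ^ m * τ).trace.re ≤
      (m:ℝ) * (ρ ^ (m+1)).trace.re + (τ ^ (m+1)).trace.re := by
  classical
  set U := (hρ.1.eigenvectorUnitary : Matrix (Fin d) (Fin d) ℂ) with hU
  set V := (hτ.1.eigenvectorUnitary : Matrix (Fin d) (Fin d) ℂ) with hV
  set lam := hρ.1.eigenvalues with hlam
  set mu := hτ.1.eigenvalues with hmu
  have hU1 : U * star U = 1 := mem_unitaryGroup_iff.mp hρ.1.eigenvectorUnitary.2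
  have hU2 : star U * U = 1 := mem_unitaryGroup_iff'.mp hρ.1.eigenvectorUnitary.2
  have hV1 : V * star V = 1 := mem_unitaryGroup_iff.mp hτ.1.eigenvectorUnitary.2
  have hV2 : star V * V = 1 := mem_unitaryGroup_iff'.mp hτ.1.eigenvectorUnitary.2
  set W := star U * V with hW
  have hsW : star W = star V * U := by
    rw [hW, StarMul.star_mul, star_star]
  have hW1 : W * star W = 1 := by
    rw [hsW, hW]
    calc star U * V * (star V * U) = star U * (V * star V) * U := by
          simp only [Matrix.mul_assoc]
      _ = 1 := by rw [hV1, Matrix.mul_one, hU2]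
  have hW2 : star W * W = 1 := by
    rw [hsW, hW]
    calc star V * U * (star U * V) = star V * (U * star U) * V := by
          simp only [Matrix.mul_assoc]
      _ = 1 := by rw [hU1, Matrix.mul_one, hV2]
  -- trace identity
  have hρm : ρ ^ m = U * (Matrix.diagonal (RCLike.ofReal ∘ lam)) ^ m * star U := by
    conv_lhs => rw [hρ.1.spectral_theorem]
    exact conj_pow hU1 hU2 m
  have htr : (ρ ^ m * τ).trace
      = (Matrix.diagonal (RCLike.ofReal ∘ lam) ^ m *
          (W * Matrix.diagonal (RCLike.ofReal ∘ mu) * star W)).trace := by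
    rw [hρm]
    conv_lhs => rw [hτ.1.spectral_theorem, Unitary.conjStarAlgAut_apply]
    have h1 : U * Matrix.diagonal (RCLike.ofReal ∘ lam) ^ m * star U *
        (V * Matrix.diagonal (RCLike.ofReal ∘ mu) * star V) =
        U * (Matrix.diagonal (RCLike.ofReal ∘ lam) ^ m * star U *
          (V * Matrix.diagonal (RCLike.ofReal ∘ mu) * star V)) := by
      simp only [Matrix.mul_assoc]
    rw [h1, Matrix.trace_mul_comm]
    congr 1
    rw [hsW, hW]
    simp only [Matrix.mul_assoc]
  -- entrywise
  have hreC : (ρ ^ m * τ).trace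
      = ((∑ j, ∑ l, lam j ^ m * (mu l * normSq (W j l)) : ℝ) : ℂ) := by
    rw [htr, diagonal_pow, trace_diag_mul]
    push_cast
    refine Finset.sum_congr rfl fun j _ => ?_
    rw [sandwich_entry, Finset.mul_sum]
    refine Finset.sum_congr rfl fun l _ => ?_
    show ((lam j : ℂ)) ^ m * ((W j l * ((mu l : ℝ) : ℂ)) * (starRingEnd ℂ) (W j l))
        = ((lam j : ℝ) : ℂ) ^ m * (((mu l : ℝ) : ℂ) * ((normSq (W j l) : ℝ) : ℂ))
    linear_combination ((lam j : ℂ)) ^ m * ((mu l : ℝ) : ℂ) * Complex.mul_conj (W j l)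
  have hre : (ρ ^ m * τ).trace.re = ∑ j, ∑ l, lam j ^ m * (mu l * normSq (W j l)) := by
    rw [hreC, Complex.ofReal_re]
  -- row and column sums
  have hrow : ∀ j, ∑ l, normSq (W j l) = 1 := by
    intro j
    have h1 : (W * star W) j j = 1 := by rw [hW1]; simp
    rw [Matrix.star_eq_conjTranspose, Matrix.mul_apply] at h1
    have h2 : ∑ l, (W j l * (starRingEnd ℂ) (W j l)) = 1 := by
      rw [← h1]
      exact Finset.sum_congr rfl fun l _ => by rw [Matrix.conjTranspose_apply]; rfl
    have h3 : ((∑ l, normSq (W j l) : ℝ) : ℂ) = 1 := by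
      push_cast
      rw [← h2]
      exact Finset.sum_congr rfl fun l _ => (Complex.mul_conj _).symm
    exact_mod_cast h3
  have hcol : ∀ l, ∑ j, normSq (W j l) = 1 := by
    intro l
    have h1 : (star W * W) l l = 1 := by rw [hW2]; simp
    rw [Matrix.star_eq_conjTranspose, Matrix.mul_apply] at h1
    have h3 : ((∑ j, normSq (W j l) : ℝ) : ℂ) = 1 := by
      push_cast
      rw [← h1]
      refine Finset.sum_congr rfl fun j _ => ?_
      rw [Matrix.conjTranspose_apply]
      exact Complex.normSq_eq_conj_mul_self
    exact_mod_cast h3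
  -- eigenvalue sums
  have hρtr : (ρ ^ (m+1)).trace.re = ∑ j, lam j ^ (m+1) := by
    rw [trace_pow_eq hρ.1 (m+1)]; exact Complex.ofReal_re _
  have hτtr : (τ ^ (m+1)).trace.re = ∑ l, mu l ^ (m+1) := by
    rw [trace_pow_eq hτ.1 (m+1)]; exact Complex.ofReal_re _
  rw [hre, hρtr, hτtr]
  calc ((m:ℝ)+1) * ∑ j, ∑ l, lam j ^ m * (mu l * normSq (W j l))
      = ∑ j, ∑ l, normSq (W j l) * (((m:ℝ)+1) * (lam j ^ m * mu l)) := by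
        rw [Finset.mul_sum]
        refine Finset.sum_congr rfl fun j _ => ?_
        rw [Finset.mul_sum]
        exact Finset.sum_congr rfl fun l _ => by ring
    _ ≤ ∑ j, ∑ l, normSq (W j l) * ((m:ℝ) * lam j ^ (m+1) + mu l ^ (m+1)) := by
        refine Finset.sum_le_sum fun j _ => Finset.sum_le_sum fun l _ => ?_
        exact mul_le_mul_of_nonneg_left
          (scalar_young m (hρ.eigenvalues_nonneg j) (hτ.eigenvalues_nonneg l))
          (normSq_nonneg _)
    _ = (∑ j, ∑ l, normSq (W j l) * ((m:ℝ) * lam j ^ (m+1)))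
        + ∑ j, ∑ l, normSq (W j l) * mu l ^ (m+1) := by
        rw [← Finset.sum_add_distrib]
        refine Finset.sum_congr rfl fun j _ => ?_
        rw [← Finset.sum_add_distrib]
        exact Finset.sum_congr rfl fun l _ => by ring
    _ = (m:ℝ) * (∑ j, lam j ^ (m+1)) + ∑ l, mu l ^ (m+1) := by
        congr 1
        · rw [Finset.mul_sum]
          refine Finset.sum_congr rfl fun j _ => ?_
          rw [← Finset.sum_mul, hrow j]
          ring
        · rw [Finset.sum_comm]
          refine Finset.sum_congr rfl fun l _ => ?_
          rw [← Finset.sum_mul, hcol l]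
          ring

lemma psd_trace_pow (h : ρ.PosSemidef) (r : ℕ) :
    (ρ ^ r).trace = (((ρ ^ r).trace.re : ℝ) : ℂ) ∧ 0 ≤ (ρ ^ r).trace.re := by
  rw [trace_pow_eq h.1 r]
  constructor
  · rw [ofReal_re]
  · simp only [ofReal_re]
    exact Finset.sum_nonneg fun j _ => pow_nonneg (h.eigenvalues_nonneg j) r

lemma psd_trace_real (h : ρ.PosSemidef) : ρ.trace = ((ρ.trace.re : ℝ) : ℂ) := by
  have := (psd_trace_pow h 1).1; simpa using this

lemma psd_trace_nonneg (h : ρ.PosSemidef) : 0 ≤ ρ.trace.re := by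
  have := (psd_trace_pow h 1).2; simpa using this

lemma psd_trace_eq_zero (h : ρ.PosSemidef) (h0 : ρ.trace = 0) : ρ = 0 := by
  have h1 := trace_pow_eq h.1 1
  rw [pow_one, h0] at h1
  have hsum : ∑ j, h.1.eigenvalues j ^ 1 = 0 := by
    have := h1.symm
    exact_mod_cast this
  have hz : ∀ j ∈ Finset.univ, h.1.eigenvalues j ^ 1 = 0 := by
    rw [Finset.sum_eq_zero_iff_of_nonneg
      (fun j _ => pow_nonneg (h.eigenvalues_nonneg j) 1)] at hsum
    exact hsum
  have hdiag : Matrix.diagonal ((fun x : ℝ => (x:ℂ)) ∘ h.1.eigenvalues) = 0 := by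
    have : ((fun x : ℝ => (x:ℂ)) ∘ h.1.eigenvalues) = fun _ => 0 := by
      funext j
      have := hz j (Finset.mem_univ j)
      simp only [pow_one] at this
      simp [Function.comp, this]
    rw [this]
    exact Matrix.diagonal_zero
  calc ρ = _ := h.1.spectral_theorem
    _ = 0 := by rw [show (RCLike.ofReal ∘ h.1.eigenvalues : Fin d → ℂ) =
        ((fun x : ℝ => (x:ℂ)) ∘ h.1.eigenvalues) from rfl, hdiag, Unitary.conjStarAlgAut_apply, Matrix.mul_zero,
        Matrix.zero_mul]

lemma density_pow_bound (h : ρ.PosSemidef) (h1 : ρ.trace = 1) (m : ℕ) (hm : 1 ≤ m) :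
    0 ≤ (ρ ^ m).trace.re ∧ (ρ ^ m).trace.re ≤ 1 := by
  refine ⟨(psd_trace_pow h m).2, ?_⟩
  have ht := trace_pow_eq h.1 1
  rw [pow_one, h1] at ht
  have hsum : ∑ j, h.1.eigenvalues j = 1 := by
    have : ((1:ℝ):ℂ) = ((∑ j, h.1.eigenvalues j ^ 1 : ℝ) : ℂ) := by exact_mod_cast ht
    have := (ofReal_inj.mp this).symm
    simpa using this
  have hle : ∀ j, h.1.eigenvalues j ≤ 1 := by
    intro j
    rw [← hsum]
    exact Finset.single_le_sum (fun i _ => h.eigenvalues_nonneg i) (Finset.mem_univ j)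
  rw [trace_pow_eq h.1 m]
  simp only [ofReal_re]
  calc ∑ j, h.1.eigenvalues j ^ m ≤ ∑ j, h.1.eigenvalues j := by
        refine Finset.sum_le_sum fun j _ => ?_
        calc h.1.eigenvalues j ^ m ≤ h.1.eigenvalues j ^ 1 :=
              pow_le_pow_of_le_one (h.eigenvalues_nonneg j) (hle j) hm
          _ = _ := pow_one _
    _ = 1 := hsum

lemma trace_pow_mul_comm (X Y : Matrix (Fin d) (Fin d) ℂ) (r : ℕ) :
    ((X * Y) ^ (r+1)).trace = ((Y * X) ^ (r+1)).trace := by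
  have hsc : SemiconjBy X (Y * X) (X * Y) := by
    unfold SemiconjBy; simp only [Matrix.mul_assoc]
  have h := (hsc.pow_right r).eq
  rw [pow_succ, ← Matrix.mul_assoc, ← h]
  rw [Matrix.trace_mul_comm]
  rw [pow_succ']
  simp only [Matrix.mul_assoc]


lemma psd_smul {M : Matrix (Fin d) (Fin d) ℂ} (h : M.PosSemidef) {c : ℝ} (hc : 0 ≤ c) :
    (((c:ℝ):ℂ) • M).PosSemidef := by
  rw [posSemidef_iff_dotProduct_mulVec]
  constructor
  · unfold Matrix.IsHermitian
    rw [Matrix.conjTranspose_smul, h.1.eq]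
    congr 1
    simp
  · intro x
    rw [Matrix.smul_mulVec, dotProduct_smul, smul_eq_mul]
    exact mul_nonneg (Complex.zero_le_real.2 hc) (h.dotProduct_mulVec_nonneg x)

lemma key_step {k : ℕ} {ρ σ : Matrix (Fin d) (Fin d) ℂ} (hρ : ρ.PosSemidef) (hρ1 : ρ.trace = 1)
    (a : Fin k → Matrix (Fin d) (Fin d) ℂ) (ha : ∑ i, (a i)ᴴ * a i = 1)
    (m : ℕ) (hm : 1 ≤ m) :
    (ρ ^ m).trace.re ≤ ∑ i, (a i * ρ * (a i)ᴴ).trace.re *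
      ((if (a i * ρ * (a i)ᴴ).trace ≠ 0
        then ((a i * ρ * (a i)ᴴ).trace)⁻¹ • (a i * ρ * (a i)ᴴ) else σ) ^ m).trace.re := by
  classical
  obtain ⟨m', rfl⟩ : ∃ m', m = m' + 1 := ⟨m - 1, (Nat.succ_pred_eq_of_pos hm).symm⟩
  open scoped MatrixOrder in
  have hRpsd : (CFC.sqrt ρ).PosSemidef := (nonneg_iff_posSemidef).mp (CFC.sqrt_nonneg ρ)
  set R := CFC.sqrt ρ with hRdef
  open scoped MatrixOrder in
  have hRR : R * R = ρ := CFC.sqrt_mul_sqrt_self ρ ((nonneg_iff_posSemidef).mpr hρ)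
  have hRH : Rᴴ = R := hRpsd.1
  set B : Fin k → Matrix (Fin d) (Fin d) ℂ := fun i => a i * ρ * (a i)ᴴ with hB
  set C : Fin k → Matrix (Fin d) (Fin d) ℂ := fun i => (a i * R)ᴴ * (a i * R) with hC
  have hCpsd : ∀ i, (C i).PosSemidef := fun i => posSemidef_conjTranspose_mul_self _
  have hBXY : ∀ i, B i = (a i * R) * (R * (a i)ᴴ) := by
    intro i; rw [hB]; dsimp only; rw [← hRR]; simp only [Matrix.mul_assoc]
  have hCYX : ∀ i, C i = (R * (a i)ᴴ) * (a i * R) := by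
    intro i; rw [hC]; dsimp only; rw [Matrix.conjTranspose_mul, hRH]
  have hBC : ∀ i (r : ℕ), (B i ^ (r+1)).trace = (C i ^ (r+1)).trace := by
    intro i r; rw [hBXY i, hCYX i]; exact trace_pow_mul_comm _ _ r
  have hBtr : ∀ i, (B i).trace = (C i).trace := by
    intro i; have := hBC i 0; simpa using this
  have hCsum : ∑ i, C i = ρ := by
    have h1 : ∀ i, C i = R * ((a i)ᴴ * a i) * R := by
      intro i; rw [hCYX i]; simp only [Matrix.mul_assoc]
    calc ∑ i, C i = ∑ i, R * ((a i)ᴴ * a i) * R := Finset.sum_congr rfl fun i _ => h1 i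
      _ = (∑ i, R * ((a i)ᴴ * a i)) * R := by rw [← Finset.sum_mul]
      _ = R * (∑ i, (a i)ᴴ * a i) * R := by rw [← Finset.mul_sum]
      _ = ρ := by rw [ha, Matrix.mul_one, hRR]
  have hslin : (ρ ^ (m'+1)).trace = ∑ i, (ρ ^ m' * C i).trace := by
    rw [← Matrix.trace_sum, ← Finset.mul_sum, hCsum, ← pow_succ]
  have claim : ∀ i, ((m':ℝ)+1) * (ρ ^ m' * C i).trace.re ≤
      (m':ℝ) * (C i).trace.re * (ρ ^ (m'+1)).trace.re +
      (B i).trace.re *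
        ((if (B i).trace ≠ 0 then ((B i).trace)⁻¹ • B i else σ) ^ (m'+1)).trace.re := by
    intro i
    by_cases hq : (B i).trace = 0
    · have hq' : (C i).trace = 0 := by rw [← hBtr i, hq]
      have hC0 : C i = 0 := psd_trace_eq_zero (hCpsd i) hq'
      simp [hC0, hq]
    · set q : ℝ := (C i).trace.re with hqdef
      have hqreal : (C i).trace = (q:ℂ) := psd_trace_real (hCpsd i)
      have hqnonneg : 0 ≤ q := psd_trace_nonneg (hCpsd i)
      have hqne : q ≠ 0 := by
        intro h0; apply hq; rw [hBtr i, hqreal, h0]; simp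
      set τ := (((q:ℝ):ℂ))⁻¹ • C i with hτdef
      have hτpsd : τ.PosSemidef := by
        rw [hτdef, ← Complex.ofReal_inv]
        exact psd_smul (hCpsd i) (inv_nonneg.mpr hqnonneg)
      have hyoung := trace_young hρ hτpsd m'
      have hCq : C i = ((q:ℝ):ℂ) • τ := by
        rw [hτdef, smul_smul, mul_inv_cancel₀ (by exact_mod_cast hqne), one_smul]
      have hL : (ρ ^ m' * C i).trace.re = q * (ρ ^ m' * τ).trace.re := by
        rw [hCq, Matrix.mul_smul, Matrix.trace_smul, smul_eq_mul, re_ofReal_mul]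
      have hstep : ((if (B i).trace ≠ 0 then ((B i).trace)⁻¹ • B i else σ) ^ (m'+1)).trace
          = (τ ^ (m'+1)).trace := by
        rw [if_pos hq]
        calc (((B i).trace⁻¹ • B i) ^ (m'+1)).trace
            = ((B i).trace⁻¹)^(m'+1) * (B i ^ (m'+1)).trace := by
              rw [smul_pow, Matrix.trace_smul, smul_eq_mul]
          _ = ((((q:ℝ):ℂ))⁻¹)^(m'+1) * (C i ^ (m'+1)).trace := by
              rw [hBtr i, hqreal, hBC i m']
          _ = (τ ^ (m'+1)).trace := by
              rw [hτdef, smul_pow, Matrix.trace_smul, smul_eq_mul]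
      have hstepre := congrArg Complex.re hstep
      rw [hL, hstepre, hBtr i, hqdef]
      have := mul_le_mul_of_nonneg_left hyoung hqnonneg
      nlinarith [this]
  have hsumle := Finset.sum_le_sum (fun i (_ : i ∈ Finset.univ) => claim i)
  have hs : (ρ ^ (m'+1)).trace.re = ∑ i, (ρ ^ m' * C i).trace.re := by
    rw [hslin, Complex.re_sum]
  have hq1 : ∑ i, (C i).trace.re = 1 := by
    have h2 : (∑ i, (C i).trace) = 1 := by rw [← Matrix.trace_sum, hCsum, hρ1]
    have h3 := congrArg Complex.re h2
    rw [Complex.re_sum] at h3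
    simpa using h3
  have hL1 : ∑ i, ((m':ℝ)+1) * (ρ ^ m' * C i).trace.re
      = ((m':ℝ)+1) * (ρ ^ (m'+1)).trace.re := by
    rw [← Finset.mul_sum, hs]
  have hR1 : ∑ i, ((m':ℝ) * (C i).trace.re * (ρ ^ (m'+1)).trace.re +
      (B i).trace.re *
        ((if (B i).trace ≠ 0 then ((B i).trace)⁻¹ • B i else σ) ^ (m'+1)).trace.re)
      = (m':ℝ) * (ρ ^ (m'+1)).trace.re +
        ∑ i, (B i).trace.re *
          ((if (B i).trace ≠ 0 then ((B i).trace)⁻¹ • B i else σ) ^ (m'+1)).trace.re := by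
    rw [Finset.sum_add_distrib]
    congr 1
    calc ∑ i, (m':ℝ) * (C i).trace.re * (ρ ^ (m'+1)).trace.re
        = ∑ i, ((m':ℝ) * (ρ ^ (m'+1)).trace.re) * (C i).trace.re :=
          Finset.sum_congr rfl fun i _ => by ring
      _ = ((m':ℝ) * (ρ ^ (m'+1)).trace.re) * ∑ i, (C i).trace.re := by
          rw [← Finset.mul_sum]
      _ = (m':ℝ) * (ρ ^ (m'+1)).trace.re := by rw [hq1, mul_one]
  rw [hL1, hR1] at hsumle
  have : (B : Fin k → Matrix (Fin d) (Fin d) ℂ) = fun i => a i * ρ * (a i)ᴴ := hB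
  linarith [hsumle]

lemma integral_cyl {k n : ℕ} (P : Measure (ℕ → Fin k)) [IsProbabilityMeasure P]
    (g : (Fin n → Fin k) → ℝ) (S : Set (Fin n → Fin k)) :
    ∫ ω in (fun (ω : ℕ → Fin k) (j : Fin n) => ω (j:ℕ)) ⁻¹' S,
        g (fun j : Fin n => ω (j:ℕ)) ∂P
      = ∑ w : Fin n → Fin k,
          S.indicator (fun w => (P {ω | ∀ j : Fin n, ω (j:ℕ) = w j}).toReal * g w) w := by
  classical
  set π : (ℕ → Fin k) → (Fin n → Fin k) := fun ω j => ω (j:ℕ) with hπdef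
  have hπ : Measurable π := measurable_pi_lambda _ fun j => measurable_pi_apply _
  have hS : MeasurableSet S := S.toFinite.measurableSet
  have hmap : ∫ ω in π ⁻¹' S, g (π ω) ∂P = ∫ y in S, g y ∂(P.map π) :=
    (setIntegral_map hS (measurable_of_countable g).aestronglyMeasurable hπ.aemeasurable).symm
  have : IsProbabilityMeasure (P.map π) := Measure.isProbabilityMeasure_map hπ.aemeasurable
  rw [show (∫ ω in π ⁻¹' S, g (π ω) ∂P) = ∫ ω in π ⁻¹' S, g (fun j : Fin n => ω (j:ℕ)) ∂P
      from rfl] at hmap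
  rw [hmap, ← integral_indicator hS, integral_fintype .of_finite]
  refine Finset.sum_congr rfl fun w _ => ?_
  have hsing : (P.map π) {w} = P {ω | ∀ j : Fin n, ω (j:ℕ) = w j} := by
    rw [Measure.map_apply hπ (measurableSet_singleton w)]
    congr 1
    ext ω
    simp only [Set.mem_preimage, Set.mem_singleton_iff, Set.mem_setOf_eq, funext_iff]
    exact Iff.rfl
  by_cases hw : w ∈ S
  · rw [Set.indicator_of_mem hw, Set.indicator_of_mem hw, Measure.real, hsing, smul_eq_mul]
  · rw [Set.indicator_of_notMem hw, Set.indicator_of_notMem hw, smul_zero]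


end QT

namespace QT

/-- The one-word trajectory matrix. -/
noncomputable def trajW {d k : ℕ} (a : Fin k → Matrix (Fin d) (Fin d) ℂ)
    (θ₀ σ : Matrix (Fin d) (Fin d) ℂ) {n : ℕ} (w : Fin n → Fin k) :
    Matrix (Fin d) (Fin d) ℂ :=
  if (wordMatrix a (List.ofFn w) * θ₀ * (wordMatrix a (List.ofFn w))ᴴ).trace ≠ 0
    then ((wordMatrix a (List.ofFn w) * θ₀ * (wordMatrix a (List.ofFn w))ᴴ).trace)⁻¹ •
      (wordMatrix a (List.ofFn w) * θ₀ * (wordMatrix a (List.ofFn w))ᴴ)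
    else σ

lemma traj_eq_trajW {d k : ℕ} (a : Fin k → Matrix (Fin d) (Fin d) ℂ)
    (θ₀ σ : Matrix (Fin d) (Fin d) ℂ) (n : ℕ) (ω : ℕ → Fin k) :
    traj a θ₀ σ n ω = trajW a θ₀ σ (fun j : Fin n => ω (j:ℕ)) := rfl

variable {d k : ℕ} {a : Fin k → Matrix (Fin d) (Fin d) ℂ}
  {θ₀ σ : Matrix (Fin d) (Fin d) ℂ}

lemma trajW_density (hθpsd : θ₀.PosSemidef) (hσpsd : σ.PosSemidef) (hσtr : σ.trace = 1)
    {n : ℕ} (w : Fin n → Fin k) :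
    (trajW a θ₀ σ w).PosSemidef ∧ (trajW a θ₀ σ w).trace = 1 := by
  unfold trajW
  set A := wordMatrix a (List.ofFn w) with hA
  have hpsd : (A * θ₀ * Aᴴ).PosSemidef := hθpsd.mul_mul_conjTranspose_same A
  by_cases h : (A * θ₀ * Aᴴ).trace = 0
  · simp only [h, ne_eq, not_true_eq_false, if_false]
    exact ⟨hσpsd, hσtr⟩
  · simp only [ne_eq, h, not_false_eq_true, if_true]
    refine ⟨?_, ?_⟩
    · rw [psd_trace_real hpsd, ← Complex.ofReal_inv]
      exact psd_smul hpsd (inv_nonneg.mpr (psd_trace_nonneg hpsd))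
    · rw [Matrix.trace_smul, smul_eq_mul, inv_mul_cancel₀ h]

lemma wordMatrix_snoc {n : ℕ} (w : Fin n → Fin k) (i : Fin k) :
    wordMatrix a (List.ofFn (Fin.snoc w i)) = a i * wordMatrix a (List.ofFn w) := by
  rw [List.ofFn_succ']
  simp only [Fin.snoc_castSucc, Fin.snoc_last]
  unfold wordMatrix
  rw [List.concat_eq_append, List.reverse_append]
  simp

lemma perword (ha : ∑ i, (a i)ᴴ * a i = 1) (hθpsd : θ₀.PosSemidef)
    (hσpsd : σ.PosSemidef) (hσtr : σ.trace = 1) (m : ℕ) (hm : 1 ≤ m)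
    {n : ℕ} (w : Fin n → Fin k) :
    (wordMatrix a (List.ofFn w) * θ₀ * (wordMatrix a (List.ofFn w))ᴴ).trace.re *
        ((trajW a θ₀ σ w) ^ m).trace.re
      ≤ ∑ i : Fin k,
          (wordMatrix a (List.ofFn (Fin.snoc w i)) * θ₀ *
              (wordMatrix a (List.ofFn (Fin.snoc w i)))ᴴ).trace.re *
            ((trajW a θ₀ σ (Fin.snoc w i)) ^ m).trace.re := by
  classical
  set A := wordMatrix a (List.ofFn w) with hA
  set B := A * θ₀ * Aᴴ with hB
  have hBpsd : B.PosSemidef := hθpsd.mul_mul_conjTranspose_same A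
  have hAi : ∀ i : Fin k, wordMatrix a (List.ofFn (Fin.snoc w i)) * θ₀ *
      (wordMatrix a (List.ofFn (Fin.snoc w i)))ᴴ = a i * B * (a i)ᴴ := by
    intro i
    rw [wordMatrix_snoc, Matrix.conjTranspose_mul, hB]
    simp only [Matrix.mul_assoc, hA]
  by_cases ht : B.trace = 0
  · have hB0 : B = 0 := psd_trace_eq_zero hBpsd ht
    have h1 : B.trace.re = 0 := by rw [ht]; simp
    rw [h1, zero_mul]
    refine Finset.sum_nonneg fun i _ => ?_
    rw [hAi i, hB0]
    simp only [Matrix.mul_zero, Matrix.zero_mul, Matrix.trace_zero]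
    simp
  · -- positive-trace case
    set t : ℝ := B.trace.re with htdef
    have htreal : B.trace = (t : ℂ) := psd_trace_real hBpsd
    have htnonneg : 0 ≤ t := psd_trace_nonneg hBpsd
    have htne : (t:ℂ) ≠ 0 := by rw [← htreal]; exact ht
    set ρ := (B.trace)⁻¹ • B with hρdef
    have hρpsd : ρ.PosSemidef := by
      rw [hρdef, htreal, ← Complex.ofReal_inv]
      exact psd_smul hBpsd (inv_nonneg.mpr htnonneg)
    have hρtr : ρ.trace = 1 := by
      rw [hρdef, Matrix.trace_smul, smul_eq_mul, inv_mul_cancel₀ ht]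
    have htrajW : trajW a θ₀ σ w = ρ := by
      unfold trajW
      rw [← hA, ← hB, if_pos ht, hρdef]
    have hBρ : B = B.trace • ρ := by
      rw [hρdef, smul_smul, mul_inv_cancel₀ ht, one_smul]
    have hBi : ∀ i : Fin k, a i * B * (a i)ᴴ = B.trace • (a i * ρ * (a i)ᴴ) := by
      intro i
      conv_lhs => rw [hBρ]
      rw [Matrix.mul_smul, Matrix.smul_mul]
    -- identify each summand
    have hterm : ∀ i : Fin k,
        (wordMatrix a (List.ofFn (Fin.snoc w i)) * θ₀ *
            (wordMatrix a (List.ofFn (Fin.snoc w i)))ᴴ).trace.re *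
          ((trajW a θ₀ σ (Fin.snoc w i)) ^ m).trace.re
        = t * ((a i * ρ * (a i)ᴴ).trace.re *
            ((if (a i * ρ * (a i)ᴴ).trace ≠ 0
              then ((a i * ρ * (a i)ᴴ).trace)⁻¹ • (a i * ρ * (a i)ᴴ) else σ) ^ m).trace.re) := by
      intro i
      have htrace_i : (wordMatrix a (List.ofFn (Fin.snoc w i)) * θ₀ *
          (wordMatrix a (List.ofFn (Fin.snoc w i)))ᴴ).trace
          = B.trace * (a i * ρ * (a i)ᴴ).trace := by
        rw [hAi i, hBi i, Matrix.trace_smul, smul_eq_mul]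
      have hre_i : (wordMatrix a (List.ofFn (Fin.snoc w i)) * θ₀ *
          (wordMatrix a (List.ofFn (Fin.snoc w i)))ᴴ).trace.re
          = t * (a i * ρ * (a i)ᴴ).trace.re := by
        rw [htrace_i, htreal, re_ofReal_mul]
      have hstep : trajW a θ₀ σ (Fin.snoc w i)
          = (if (a i * ρ * (a i)ᴴ).trace ≠ 0
              then ((a i * ρ * (a i)ᴴ).trace)⁻¹ • (a i * ρ * (a i)ᴴ) else σ) := by
        unfold trajW
        rw [hAi i, hBi i, Matrix.trace_smul, smul_eq_mul]
        by_cases hq : (a i * ρ * (a i)ᴴ).trace = 0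
        · rw [hq, mul_zero]
          simp
        · rw [if_pos (mul_ne_zero ht hq), if_pos hq, smul_smul, _root_.mul_inv_rev,
            mul_assoc, inv_mul_cancel₀ ht, mul_one]
      rw [hre_i, hstep]
      ring
    calc B.trace.re * ((trajW a θ₀ σ w) ^ m).trace.re
        = t * (ρ ^ m).trace.re := by rw [htrajW]
      _ ≤ t * ∑ i, ((a i * ρ * (a i)ᴴ).trace.re *
            ((if (a i * ρ * (a i)ᴴ).trace ≠ 0
              then ((a i * ρ * (a i)ᴴ).trace)⁻¹ • (a i * ρ * (a i)ᴴ) else σ) ^ m).trace.re) := by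
          refine mul_le_mul_of_nonneg_left ?_ htnonneg
          exact key_step hρpsd hρtr a ha m hm
      _ = ∑ i, t * ((a i * ρ * (a i)ᴴ).trace.re *
            ((if (a i * ρ * (a i)ᴴ).trace ≠ 0
              then ((a i * ρ * (a i)ᴴ).trace)⁻¹ • (a i * ρ * (a i)ᴴ) else σ) ^ m).trace.re) := by
          rw [Finset.mul_sum]
      _ = _ := by
          refine (Finset.sum_congr rfl fun i _ => ?_).symm
          exact hterm i

end QT

/-- For every `m`, the `m`-th moment process `M_n = tr(Θ_n^m)` takes values in `[0,1]`
and is a submartingale with respect to the coordinate filtration and `P`. -/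
theorem moments_are_submartingales {d k : ℕ}
    (a : Fin k → Matrix (Fin d) (Fin d) ℂ)
    (ha : ∑ i, (a i)ᴴ * a i = 1)
    (θ₀ : Matrix (Fin d) (Fin d) ℂ)
    (hθ₀ : θ₀.PosSemidef ∧ θ₀.trace = 1)
    (σ : Matrix (Fin d) (Fin d) ℂ)
    (hσ : σ.PosSemidef ∧ σ.trace = 1)
    (P : Measure (ℕ → Fin k)) [IsProbabilityMeasure P]
    (hP : CylinderCondition a θ₀ P)
    (m : ℕ) (hm : 1 ≤ m) :
    (∀ (n : ℕ) (ω : ℕ → Fin k),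
        0 ≤ ((traj a θ₀ σ n ω) ^ m).trace.re ∧
          ((traj a θ₀ σ n ω) ^ m).trace.re ≤ 1) ∧
    Submartingale (fun (n : ℕ) (ω : ℕ → Fin k) => ((traj a θ₀ σ n ω) ^ m).trace.re)
      (coordFiltration k) P := by
  classical
  obtain ⟨hθpsd, hθtr⟩ := hθ₀
  obtain ⟨hσpsd, hσtr⟩ := hσ
  have htraj : ∀ (n : ℕ) (ω : ℕ → Fin k),
      (traj a θ₀ σ n ω).PosSemidef ∧ (traj a θ₀ σ n ω).trace = 1 := fun n ω => by
    rw [QT.traj_eq_trajW]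
    exact QT.trajW_density hθpsd hσpsd hσtr _
  have hbd : ∀ (n : ℕ) (ω : ℕ → Fin k),
      0 ≤ ((traj a θ₀ σ n ω) ^ m).trace.re ∧ ((traj a θ₀ σ n ω) ^ m).trace.re ≤ 1 :=
    fun n ω => QT.density_pow_bound (htraj n ω).1 (htraj n ω).2 m hm
  refine ⟨hbd, ?_⟩
  have hmeas : ∀ n, Measurable[(coordFiltration k) n]
      (fun ω : ℕ → Fin k => ((traj a θ₀ σ n ω) ^ m).trace.re) := by
    intro n
    have heq : (fun ω : ℕ → Fin k => ((traj a θ₀ σ n ω) ^ m).trace.re)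
        = (fun w : Fin n → Fin k => ((QT.trajW a θ₀ σ w) ^ m).trace.re)
          ∘ (fun (ω : ℕ → Fin k) (j : Fin n) => ω (j:ℕ)) := rfl
    rw [heq]
    exact (measurable_of_countable _).comp (comap_measurable _)
  have hadp : StronglyAdapted (coordFiltration k)
      (fun n (ω : ℕ → Fin k) => ((traj a θ₀ σ n ω) ^ m).trace.re) :=
    fun n => (hmeas n).stronglyMeasurable
  have hint : ∀ n, Integrable (fun ω : ℕ → Fin k => ((traj a θ₀ σ n ω) ^ m).trace.re) P := by
    intro n
    refine ⟨(((hmeas n).mono ((coordFiltration k).le n) le_rfl)).aestronglyMeasurable, ?_⟩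
    refine HasFiniteIntegral.of_bounded (C := 1) (ae_of_all _ fun ω => ?_)
    rw [Real.norm_eq_abs, abs_le]
    exact ⟨by linarith [(hbd n ω).1], (hbd n ω).2⟩
  refine submartingale_of_setIntegral_le_succ hadp hint ?_
  intro n s hs
  have hs' : MeasurableSet[MeasurableSpace.comap
      (fun (ω : ℕ → Fin k) (j : Fin n) => ω (j:ℕ)) inferInstance] s := hs
  obtain ⟨S, -, rfl⟩ := hs'
  set S' : Set (Fin (n+1) → Fin k) :=
    (fun (v : Fin (n+1) → Fin k) (j : Fin n) => v j.castSucc) ⁻¹' S with hS'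
  have hLHS : ∫ ω in (fun (ω : ℕ → Fin k) (j : Fin n) => ω (j:ℕ)) ⁻¹' S,
      ((traj a θ₀ σ n ω) ^ m).trace.re ∂P
      = ∑ w : Fin n → Fin k, S.indicator (fun w =>
          (P {ω | ∀ j : Fin n, ω (j:ℕ) = w j}).toReal *
            ((QT.trajW a θ₀ σ w) ^ m).trace.re) w :=
    QT.integral_cyl P (fun w : Fin n → Fin k => ((QT.trajW a θ₀ σ w) ^ m).trace.re) S
  have hpre : (fun (ω : ℕ → Fin k) (j : Fin n) => ω (j:ℕ)) ⁻¹' S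
      = (fun (ω : ℕ → Fin k) (j : Fin (n+1)) => ω (j:ℕ)) ⁻¹' S' := rfl
  have hRHS : ∫ ω in (fun (ω : ℕ → Fin k) (j : Fin n) => ω (j:ℕ)) ⁻¹' S,
      ((traj a θ₀ σ (n+1) ω) ^ m).trace.re ∂P
      = ∑ v : Fin (n+1) → Fin k, S'.indicator (fun v =>
          (P {ω | ∀ j : Fin (n+1), ω (j:ℕ) = v j}).toReal *
            ((QT.trajW a θ₀ σ v) ^ m).trace.re) v := by
    rw [hpre]
    exact QT.integral_cyl P (fun v : Fin (n+1) → Fin k => ((QT.trajW a θ₀ σ v) ^ m).trace.re) S'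
  rw [hLHS, hRHS]
  set F : (Fin (n+1) → Fin k) → ℝ := fun v =>
    (P {ω | ∀ j : Fin (n+1), ω (j:ℕ) = v j}).toReal * ((QT.trajW a θ₀ σ v) ^ m).trace.re
    with hF
  have hreindex : ∑ v : Fin (n+1) → Fin k, S'.indicator F v
      = ∑ w : Fin n → Fin k, ∑ i : Fin k, S'.indicator F (Fin.snoc w i) := by
    calc ∑ v : Fin (n+1) → Fin k, S'.indicator F v
        = ∑ p : Fin k × (Fin n → Fin k), S'.indicator F (Fin.snoc p.2 p.1) :=
          (Fintype.sum_equiv (Fin.snocEquiv (fun _ => Fin k))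
            (fun p => S'.indicator F (Fin.snoc p.2 p.1))
            (fun v => S'.indicator F v) (fun p => rfl)).symm
      _ = ∑ i : Fin k, ∑ w : Fin n → Fin k, S'.indicator F (Fin.snoc w i) := by
          rw [Fintype.sum_prod_type]
      _ = ∑ w : Fin n → Fin k, ∑ i : Fin k, S'.indicator F (Fin.snoc w i) :=
          Finset.sum_comm
  rw [hreindex]
  refine Finset.sum_le_sum fun w _ => ?_
  have hmem : ∀ i : Fin k, Fin.snoc w i ∈ S' ↔ w ∈ S := by
    intro i
    rw [hS', Set.mem_preimage]
    have h2 : (fun j : Fin n => (Fin.snoc w i : Fin (n+1) → Fin k) j.castSucc) = w := by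
      funext j; simp
    rw [h2]
  by_cases hw : w ∈ S
  · rw [Set.indicator_of_mem hw]
    have hPval : ∀ (N : ℕ) (v : Fin N → Fin k),
        (P {ω | ∀ j : Fin N, ω (j:ℕ) = v j}).toReal
        = (wordMatrix a (List.ofFn v) * θ₀ * (wordMatrix a (List.ofFn v))ᴴ).trace.re := by
      intro N v
      rw [hP N v, ENNReal.toReal_ofReal
        (QT.psd_trace_nonneg (hθpsd.mul_mul_conjTranspose_same _))]
    calc (P {ω | ∀ j : Fin n, ω (j:ℕ) = w j}).toReal * ((QT.trajW a θ₀ σ w) ^ m).trace.re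
        = (wordMatrix a (List.ofFn w) * θ₀ * (wordMatrix a (List.ofFn w))ᴴ).trace.re *
            ((QT.trajW a θ₀ σ w) ^ m).trace.re := by rw [hPval n w]
      _ ≤ ∑ i : Fin k,
            (wordMatrix a (List.ofFn (Fin.snoc w i)) * θ₀ *
                (wordMatrix a (List.ofFn (Fin.snoc w i)))ᴴ).trace.re *
              ((QT.trajW a θ₀ σ (Fin.snoc w i)) ^ m).trace.re :=
          QT.perword ha hθpsd hσpsd hσtr m hm w
      _ = ∑ i : Fin k, S'.indicator F (Fin.snoc w i) := by
          refine Finset.sum_congr rfl fun i _ => ?_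
          rw [Set.indicator_of_mem ((hmem i).mpr hw), hF]
          dsimp only
          rw [hPval (n+1) (Fin.snoc w i)]
  · rw [Set.indicator_of_notMem hw]
    refine Finset.sum_nonneg fun i _ => ?_
    rw [Set.indicator_of_notMem (fun h => hw ((hmem i).mp h))]
end
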